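/- arXiv:2004.09490 — 5 statements merged into one kernel-verified Lean document; each statement's English description precedes it below -/
import Mathlib

section
/- Energy identity for the transport problem on a network (Theorem 2.2): Every classical solution u of the transport network problem on [0,T] with inflow boundary data g satisfies, for all t ∈ (0,T), d/dt ∑_{e∈E} a^e ∫₀^{ℓ^e} (u^e(x,t))² dx = ∑_{v∈V∂^in} b^{e(v)} (g^v(t))² − ∑_{v∈V∂^out} b^{e(v)} (u^{e(v)}(v,t))² − ∑_{v∈V₀} ∑_{e∈E^in(v)} b^e (u^e(v,t) − û^v(t))², where e(v) denotes the unique edge incident to the boundary vertex v and û^v(t) are the nodal values from the coupling conditions. In particular, the mixing at junctions generates dissipation. -/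
open Set Finset

/-- Signed incidence number `n^e(v)`: `-1` at the start vertex, `+1` at the end vertex,
`0` otherwise. -/
def inc {E V : Type} [DecidableEq V] (src tgt : E → V) (e : E) (v : V) : ℝ :=
  (if tgt e = v then (1 : ℝ) else 0) - (if src e = v then (1 : ℝ) else 0)

/-- Number of edges incident to the vertex `v`. -/
def edgeDeg {E V : Type} [Fintype E] [DecidableEq V] (src tgt : E → V) (v : V) : ℕ :=
  (Finset.univ.filter (fun e => src e = v ∨ tgt e = v)).card

/-- A classical solution of the transport problem on the network with edges `E`,
vertices `V`, edge lengths `ℓ`, coefficients `a`, `b`, time horizon `T`, initial data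
`u0` and inflow boundary data `g`.  The fields `ux`, `ut` are the spatial and temporal
derivatives of `u` and `uhat` are the nodal values (only relevant at vertices that are
not outflow boundary vertices). -/
structure TSol (E V : Type) [Fintype E] [Fintype V] [DecidableEq E] [DecidableEq V]
    (src tgt : E → V) (ℓ a b : E → ℝ) (T : ℝ)
    (u0 : E → ℝ → ℝ) (g : V → ℝ → ℝ) : Type where
  u : E → ℝ → ℝ → ℝ
  ux : E → ℝ → ℝ → ℝ
  ut : E → ℝ → ℝ → ℝ
  uhat : V → ℝ → ℝ
  cont_u : ∀ e, ContinuousOn (fun p : ℝ × ℝ => u e p.1 p.2) (Set.Icc 0 (ℓ e) ×ˢ Set.Icc 0 T)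
  cont_ux : ∀ e, ContinuousOn (fun p : ℝ × ℝ => ux e p.1 p.2) (Set.Icc 0 (ℓ e) ×ˢ Set.Icc 0 T)
  cont_ut : ∀ e, ContinuousOn (fun p : ℝ × ℝ => ut e p.1 p.2) (Set.Icc 0 (ℓ e) ×ˢ Set.Icc 0 T)
  hasDeriv_x : ∀ e, ∀ t ∈ Set.Icc (0 : ℝ) T, ∀ x ∈ Set.Icc (0 : ℝ) (ℓ e),
      HasDerivWithinAt (fun y => u e y t) (ux e x t) (Set.Icc 0 (ℓ e)) x
  hasDeriv_t : ∀ e, ∀ x ∈ Set.Icc (0 : ℝ) (ℓ e), ∀ t ∈ Set.Icc (0 : ℝ) T,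
      HasDerivWithinAt (fun s => u e x s) (ut e x t) (Set.Icc 0 T) t
  pde : ∀ e, ∀ x ∈ Set.Icc (0 : ℝ) (ℓ e), ∀ t ∈ Set.Icc (0 : ℝ) T,
      a e * ut e x t + b e * ux e x t = 0
  inflow_value : ∀ (e : E), ∀ t ∈ Set.Icc (0 : ℝ) T, u e 0 t = uhat (src e) t
  coupling : ∀ v : V, 2 ≤ edgeDeg src tgt v → ∀ t ∈ Set.Icc (0 : ℝ) T,
      ∑ e ∈ Finset.univ.filter (fun e => tgt e = v), b e * u e (ℓ e) t
        = (∑ e ∈ Finset.univ.filter (fun e => src e = v), b e) * uhat v t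
  bdry_in : ∀ v : V, edgeDeg src tgt v = 1 → (∃ e, src e = v) →
      ∀ t ∈ Set.Icc (0 : ℝ) T, uhat v t = g v t
  init : ∀ e, ∀ x ∈ Set.Icc (0 : ℝ) (ℓ e), u e x 0 = u0 e x

/-!
Multiplying the transport equation by `2u` gives `a ∂ₜ(u²) + b ∂ₓ(u²) = 0`, so on each edge
`d/dt a ∫ u² = b u(start)² - b u(end)²`. Summed over all edges and regrouped by vertices, each
vertex contributes the net flux `(∑_{out} b) û² - ∑_{in} b u²`. At a boundary vertex this is the
inflow or the outflow term. At an inner vertex, Kirchhoff's law `∑_{in} b = ∑_{out} b` and the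
coupling condition make `û` the `b`-weighted mean of the incoming traces, and the flux becomes
minus their weighted variance `∑_{in} b (u - û)²`.
-/

open scoped Interval

theorem hasDerivAt_intervalIntegral_of_continuousOn {f f' : ℝ → ℝ → ℝ} {α β c d t : ℝ}
    (hf : ContinuousOn (fun p : ℝ × ℝ => f p.1 p.2) ([[α, β]] ×ˢ Icc c d))
    (hf' : ContinuousOn (fun p : ℝ × ℝ => f' p.1 p.2) ([[α, β]] ×ˢ Icc c d))
    (hderiv : ∀ x ∈ [[α, β]], ∀ s ∈ Icc c d, HasDerivWithinAt (f x) (f' x s) (Icc c d) s)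
    (ht : t ∈ Ioo c d) :
    HasDerivAt (fun s => ∫ x in α..β, f x s) (∫ x in α..β, f' x t) t := by
  obtain ⟨C, hC⟩ := (isCompact_uIcc.prod isCompact_Icc).exists_bound_of_continuousOn hf'
  obtain ⟨ε, hε, hball⟩ := Metric.mem_nhds_iff.1 (Ioo_mem_nhds ht.1 ht.2)
  have htI : t ∈ Icc c d := Ioo_subset_Icc_self ht
  refine (intervalIntegral.hasDerivAt_integral_of_dominated_loc_of_deriv_le
    (F := fun s x => f x s) (F' := fun s x => f' x s) (a := α) (b := β)
    (bound := fun _ => C) (μ := MeasureTheory.volume) (Metric.ball_mem_nhds t hε)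
    ?_ ?_ ?_ ?_ intervalIntegrable_const ?_).2
  · filter_upwards [Ioo_mem_nhds ht.1 ht.2] with s hs
    exact ((hf.uncurry_right (f := f) s (Ioo_subset_Icc_self hs)).mono uIoc_subset_uIcc)
      |>.aestronglyMeasurable measurableSet_uIoc
  · exact (hf.uncurry_right (f := f) t htI).intervalIntegrable
  · exact ((hf'.uncurry_right (f := f') t htI).mono uIoc_subset_uIcc)
      |>.aestronglyMeasurable measurableSet_uIoc
  · exact MeasureTheory.ae_of_all _ fun x hx s hs =>
      hC (x, s) ⟨uIoc_subset_uIcc hx, Ioo_subset_Icc_self (hball hs)⟩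
  · exact MeasureTheory.ae_of_all _ fun x hx s hs =>
      (hderiv x (uIoc_subset_uIcc hx) s (Ioo_subset_Icc_self (hball hs))).hasDerivAt
        (Icc_mem_nhds (hball hs).1 (hball hs).2)

theorem integral_two_mul_mul_deriv_eq_sq_sub {φ φ' : ℝ → ℝ} {α β : ℝ} (hαβ : α ≤ β)
    (hφ : ∀ x ∈ Icc α β, HasDerivWithinAt φ (φ' x) (Icc α β) x)
    (hφ' : ContinuousOn φ' (Icc α β)) :
    ∫ x in α..β, 2 * φ x * φ' x = φ β ^ 2 - φ α ^ 2 := by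
  have hφc : ContinuousOn φ (Icc α β) := fun x hx => (hφ x hx).continuousWithinAt
  refine intervalIntegral.integral_eq_sub_of_hasDeriv_right_of_le hαβ (hφc.pow 2)
    (fun x hx => ?_) ?_
  · have hsq := ((hφ x (Ioo_subset_Icc_self hx)).hasDerivAt (Icc_mem_nhds hx.1 hx.2)).pow 2
    simpa [mul_comm, mul_assoc, mul_left_comm] using hsq.hasDerivWithinAt (s := Ioi x)
  · exact ((continuousOn_const.mul hφc).mul hφ').intervalIntegrable_of_Icc hαβ

theorem hasDerivAt_energy_of_transport {u ux ut : ℝ → ℝ → ℝ} {L T a b t : ℝ} (hL : 0 ≤ L)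
    (hu : ContinuousOn (fun p : ℝ × ℝ => u p.1 p.2) (Icc 0 L ×ˢ Icc 0 T))
    (hut : ContinuousOn (fun p : ℝ × ℝ => ut p.1 p.2) (Icc 0 L ×ˢ Icc 0 T))
    (hux : ContinuousOn (fun x => ux x t) (Icc 0 L))
    (hdt : ∀ x ∈ Icc 0 L, ∀ s ∈ Icc 0 T, HasDerivWithinAt (u x) (ut x s) (Icc 0 T) s)
    (hdx : ∀ x ∈ Icc 0 L, HasDerivWithinAt (fun y => u y t) (ux x t) (Icc 0 L) x)
    (hpde : ∀ x ∈ Icc 0 L, a * ut x t + b * ux x t = 0) (ht : t ∈ Ioo 0 T) :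
    HasDerivAt (fun s => a * ∫ x in 0..L, u x s ^ 2) (b * u 0 t ^ 2 - b * u L t ^ 2) t := by
  rw [← uIcc_of_le hL] at hu hut hdt
  have hderiv : HasDerivAt (fun s => ∫ x in 0..L, u x s ^ 2)
      (∫ x in 0..L, 2 * u x t * ut x t) t :=
    hasDerivAt_intervalIntegral_of_continuousOn (f := fun x s => u x s ^ 2)
      (f' := fun x s => 2 * u x s * ut x s) (hu.pow 2) ((continuousOn_const.mul hu).mul hut)
      (fun x hx s hs => ((hdt x hx s hs).fun_pow 2).congr_deriv (by ring)) ht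
  have hflux : b * u 0 t ^ 2 - b * u L t ^ 2 = a * ∫ x in 0..L, 2 * u x t * ut x t :=
    calc b * u 0 t ^ 2 - b * u L t ^ 2
        = -(b * ∫ x in 0..L, 2 * u x t * ux x t) := by
          rw [integral_two_mul_mul_deriv_eq_sq_sub hL hdx hux]; ring
      _ = ∫ x in 0..L, a * (2 * u x t * ut x t) := by
          rw [← intervalIntegral.integral_const_mul, ← intervalIntegral.integral_neg]
          refine intervalIntegral.integral_congr fun x hx => ?_
          rw [uIcc_of_le hL] at hx
          linear_combination (-2 * u x t) * hpde x hx
      _ = a * ∫ x in 0..L, 2 * u x t * ut x t := intervalIntegral.integral_const_mul _ _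
  rw [hflux]
  exact hderiv.const_mul a

section Network

variable {E V : Type} [Fintype E] [DecidableEq V] {src tgt : E → V}

def nodeFlux (src tgt : E → V) (b U : E → ℝ) (H : V → ℝ) (v : V) : ℝ :=
  (∑ e ∈ univ.filter (fun e => src e = v), b e) * H v ^ 2
    - ∑ e ∈ univ.filter (fun e => tgt e = v), b e * U e ^ 2

theorem sum_sub_sum_eq_sum_nodeFlux [Fintype V] (b U : E → ℝ) (H : V → ℝ) :
    ∑ e, b e * H (src e) ^ 2 - ∑ e, b e * U e ^ 2 = ∑ v, nodeFlux src tgt b U H v := by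
  simp only [nodeFlux, sum_sub_distrib, sum_mul]
  rw [← sum_fiberwise univ src, ← sum_fiberwise univ tgt]
  congr 1
  refine sum_congr rfl fun v _ => sum_congr rfl fun e he => ?_
  rw [(mem_filter.1 he).2]

theorem nodeFlux_eq_neg_sum_sq_sub {b U : E → ℝ} {H : V → ℝ} {v : V}
    (hflow : ∑ e ∈ univ.filter (fun e => tgt e = v), b e
      = ∑ e ∈ univ.filter (fun e => src e = v), b e)
    (hcoupling : ∑ e ∈ univ.filter (fun e => tgt e = v), b e * U e
      = (∑ e ∈ univ.filter (fun e => src e = v), b e) * H v) :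
    nodeFlux src tgt b U H v
      = -∑ e ∈ univ.filter (fun e => tgt e = v), b e * (U e - H v) ^ 2 := by
  have hexpand : ∑ e ∈ univ.filter (fun e => tgt e = v), b e * (U e - H v) ^ 2
      = ∑ e ∈ univ.filter (fun e => tgt e = v), b e * U e ^ 2
        - 2 * H v * ∑ e ∈ univ.filter (fun e => tgt e = v), b e * U e
        + H v ^ 2 * ∑ e ∈ univ.filter (fun e => tgt e = v), b e := by
    rw [mul_sum, mul_sum, ← sum_sub_distrib, ← sum_add_distrib]
    exact sum_congr rfl fun e _ => by ring
  rw [nodeFlux, hexpand, hcoupling, hflow]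
  ring

theorem eq_of_edgeDeg_eq_one {v : V} {e e₀ : E} (hd : edgeDeg src tgt v = 1)
    (he : src e = v ∨ tgt e = v) (he₀ : src e₀ = v ∨ tgt e₀ = v) : e = e₀ :=
  card_le_one.1 hd.le e (by simpa using he) e₀ (by simpa using he₀)

theorem nodeFlux_of_src_eq (hne : ∀ e, src e ≠ tgt e) {b U : E → ℝ} {H : V → ℝ} {v : V}
    {e₀ : E} (hd : edgeDeg src tgt v = 1) (hs : src e₀ = v) :
    nodeFlux src tgt b U H v = b e₀ * H v ^ 2 := by
  have hout : univ.filter (fun e => src e = v) = {e₀} :=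
    eq_singleton_iff_unique_mem.2
      ⟨by simp [hs], fun e he => eq_of_edgeDeg_eq_one hd (.inl (mem_filter.1 he).2) (.inl hs)⟩
  have hin : univ.filter (fun e => tgt e = v) = ∅ := filter_eq_empty_iff.2 fun e _ ht => by
    obtain rfl := eq_of_edgeDeg_eq_one hd (.inr ht) (.inl hs)
    exact hne e (hs.trans ht.symm)
  simp [nodeFlux, hout, hin]

theorem nodeFlux_of_tgt_eq (hne : ∀ e, src e ≠ tgt e) {b U : E → ℝ} {H : V → ℝ} {v : V}
    {e₀ : E} (hd : edgeDeg src tgt v = 1) (ht : tgt e₀ = v) :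
    nodeFlux src tgt b U H v = -(b e₀ * U e₀ ^ 2) := by
  have hin : univ.filter (fun e => tgt e = v) = {e₀} :=
    eq_singleton_iff_unique_mem.2
      ⟨by simp [ht], fun e he => eq_of_edgeDeg_eq_one hd (.inr (mem_filter.1 he).2) (.inr ht)⟩
  have hout : univ.filter (fun e => src e = v) = ∅ := filter_eq_empty_iff.2 fun e _ hs => by
    obtain rfl := eq_of_edgeDeg_eq_one hd (.inl hs) (.inr ht)
    exact hne e (hs.trans ht.symm)
  simp [nodeFlux, hout, hin]

theorem sum_nodeFlux_eq [Fintype V] (hne : ∀ e, src e ≠ tgt e) (hdeg : ∀ v, 1 ≤ edgeDeg src tgt v)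
    {b U : E → ℝ} {H G : V → ℝ}
    (hflow : ∀ v, 2 ≤ edgeDeg src tgt v →
      ∑ e ∈ univ.filter (fun e => tgt e = v), b e = ∑ e ∈ univ.filter (fun e => src e = v), b e)
    (hcoupling : ∀ v, 2 ≤ edgeDeg src tgt v →
      ∑ e ∈ univ.filter (fun e => tgt e = v), b e * U e
        = (∑ e ∈ univ.filter (fun e => src e = v), b e) * H v)
    (hbdry : ∀ v, edgeDeg src tgt v = 1 → (∃ e, src e = v) → H v = G v)
    (eOf : V → E) (heOf : ∀ v, edgeDeg src tgt v = 1 → src (eOf v) = v ∨ tgt (eOf v) = v) :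
    ∑ v, nodeFlux src tgt b U H v
      = ∑ v ∈ univ.filter (fun v => edgeDeg src tgt v = 1 ∧ src (eOf v) = v),
          b (eOf v) * G v ^ 2
        - ∑ v ∈ univ.filter (fun v => edgeDeg src tgt v = 1 ∧ tgt (eOf v) = v),
          b (eOf v) * U (eOf v) ^ 2
        - ∑ v ∈ univ.filter (fun v => 2 ≤ edgeDeg src tgt v),
          ∑ e ∈ univ.filter (fun e => tgt e = v), b e * (U e - H v) ^ 2 := by
  rw [sum_filter (fun v => edgeDeg src tgt v = 1 ∧ src (eOf v) = v),
    sum_filter (fun v => edgeDeg src tgt v = 1 ∧ tgt (eOf v) = v),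
    sum_filter (fun v => 2 ≤ edgeDeg src tgt v), ← sum_sub_distrib, ← sum_sub_distrib]
  refine sum_congr rfl fun v _ => ?_
  rcases (hdeg v).eq_or_lt with hd | hd
  · rcases heOf v hd.symm with hs | ht
    · have hnt : tgt (eOf v) ≠ v := fun ht => hne _ (hs.trans ht.symm)
      simp [nodeFlux_of_src_eq hne hd.symm hs, hbdry v hd.symm ⟨_, hs⟩, ← hd, hs, hnt]
    · have hns : src (eOf v) ≠ v := fun hs => hne _ (hs.trans ht.symm)
      simp [nodeFlux_of_tgt_eq hne hd.symm ht, ← hd, ht, hns]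
  · simp [nodeFlux_eq_neg_sum_sq_sub (hflow v hd) (hcoupling v hd), hd, hd.ne']

end Network

theorem transport_energy_identity_general
    (E V : Type) [Fintype E] [Fintype V] [DecidableEq E] [DecidableEq V]
    (src tgt : E → V) (hne : ∀ e, src e ≠ tgt e)
    (ℓ a b : E → ℝ) (T : ℝ)
    (hℓ : ∀ e, 0 < ℓ e)
    (hdeg : ∀ v : V, 1 ≤ edgeDeg src tgt v)
    (hflow : ∀ v : V, 2 ≤ edgeDeg src tgt v →
      ∑ e ∈ Finset.univ.filter (fun e => tgt e = v), b e
        = ∑ e ∈ Finset.univ.filter (fun e => src e = v), b e)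
    (u0 : E → ℝ → ℝ) (g : V → ℝ → ℝ)
    (sol : TSol E V src tgt ℓ a b T u0 g)
    (eOf : V → E)
    (heOf : ∀ v : V, edgeDeg src tgt v = 1 → (src (eOf v) = v ∨ tgt (eOf v) = v)) :
    ∀ t ∈ Set.Ioo (0 : ℝ) T,
      HasDerivAt (fun s => ∑ e, a e * ∫ x in (0 : ℝ)..(ℓ e), (sol.u e x s) ^ 2)
        (∑ v ∈ Finset.univ.filter
            (fun v : V => edgeDeg src tgt v = 1 ∧ src (eOf v) = v),
            b (eOf v) * (g v t) ^ 2
          - ∑ v ∈ Finset.univ.filter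
              (fun v : V => edgeDeg src tgt v = 1 ∧ tgt (eOf v) = v),
              b (eOf v) * (sol.u (eOf v) (ℓ (eOf v)) t) ^ 2
          - ∑ v ∈ Finset.univ.filter (fun v : V => 2 ≤ edgeDeg src tgt v),
              ∑ e ∈ Finset.univ.filter (fun e => tgt e = v),
                b e * (sol.u e (ℓ e) t - sol.uhat v t) ^ 2) t := by
  intro t ht
  have htI : t ∈ Icc 0 T := Ioo_subset_Icc_self ht
  have hedge : ∀ e, HasDerivAt (fun s => a e * ∫ x in (0 : ℝ)..(ℓ e), sol.u e x s ^ 2)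
      (b e * sol.uhat (src e) t ^ 2 - b e * sol.u e (ℓ e) t ^ 2) t := fun e => by
    rw [← sol.inflow_value e t htI]
    exact hasDerivAt_energy_of_transport (hℓ e).le (sol.cont_u e) (sol.cont_ut e)
      ((sol.cont_ux e).uncurry_right (f := sol.ux e) t htI) (sol.hasDeriv_t e)
      (sol.hasDeriv_x e t htI) (fun x hx => sol.pde e x hx t htI) ht
  have hsum := HasDerivAt.fun_sum (u := univ) fun e _ => hedge e
  rw [sum_sub_distrib,
    sum_sub_sum_eq_sum_nodeFlux b (fun e => sol.u e (ℓ e) t) (fun v => sol.uhat v t),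
    sum_nodeFlux_eq hne hdeg hflow (fun v hv => sol.coupling v hv t htI)
      (fun v hd hs => sol.bdry_in v hd hs t htI) eOf heOf] at hsum
  exact hsum

/-- **Theorem 2.2 (energy identity for the transport problem on a network).**
Every classical solution satisfies, for all `t ∈ (0,T)`,
`d/dt ∑ₑ aᵉ ∫₀^{ℓᵉ} (uᵉ)² dx = ∑_{v ∈ V∂ⁱⁿ} bᵉ (gᵛ)² − ∑_{v ∈ V∂ᵒᵘᵗ} bᵉ (uᵉ(v))²
  − ∑_{v ∈ V₀} ∑_{e ∈ Eⁱⁿ(v)} bᵉ (uᵉ(v) − ûᵛ)²`,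
where `eOf v` is the unique edge incident to the boundary vertex `v`; in particular the
mixing at the junctions generates dissipation. -/
theorem transport_energy_identity
    (E V : Type) [Fintype E] [Fintype V] [DecidableEq E] [DecidableEq V]
    (src tgt : E → V) (hne : ∀ e, src e ≠ tgt e)
    (ℓ a b : E → ℝ) (T : ℝ) (hT : 0 < T)
    (hℓ : ∀ e, 0 < ℓ e) (ha : ∀ e, 0 < a e) (hb : ∀ e, 0 < b e)
    (hdeg : ∀ v : V, 1 ≤ edgeDeg src tgt v)
    (hinout : ∀ v : V, 2 ≤ edgeDeg src tgt v → (∃ e, tgt e = v) ∧ (∃ e, src e = v))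
    (hflow : ∀ v : V, 2 ≤ edgeDeg src tgt v →
      ∑ e ∈ Finset.univ.filter (fun e => tgt e = v), b e
        = ∑ e ∈ Finset.univ.filter (fun e => src e = v), b e)
    (u0 : E → ℝ → ℝ) (g : V → ℝ → ℝ)
    (sol : TSol E V src tgt ℓ a b T u0 g)
    (eOf : V → E)
    (heOf : ∀ v : V, edgeDeg src tgt v = 1 → (src (eOf v) = v ∨ tgt (eOf v) = v)) :
    ∀ t ∈ Set.Ioo (0 : ℝ) T,
      HasDerivAt (fun s => ∑ e, a e * ∫ x in (0 : ℝ)..(ℓ e), (sol.u e x s) ^ 2)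
        (∑ v ∈ Finset.univ.filter
            (fun v : V => edgeDeg src tgt v = 1 ∧ src (eOf v) = v),
            b (eOf v) * (g v t) ^ 2
          - ∑ v ∈ Finset.univ.filter
              (fun v : V => edgeDeg src tgt v = 1 ∧ tgt (eOf v) = v),
              b (eOf v) * (sol.u (eOf v) (ℓ (eOf v)) t) ^ 2
          - ∑ v ∈ Finset.univ.filter (fun v : V => 2 ≤ edgeDeg src tgt v),
              ∑ e ∈ Finset.univ.filter (fun e => tgt e = v),
                b e * (sol.u e (ℓ e) t - sol.uhat v t) ^ 2) t :=
  transport_energy_identity_general E V src tgt hne ℓ a b T hℓ hdeg hflow u0 g sol eOf heOf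
end

section
/- Weak maximum principle on networks (Lemma 3.1): Let u = (u^e) be a family of functions u^e : [0,ℓ^e]×[0,T] → ℝ, continuous, continuously differentiable in t and twice continuously differentiable in x with derivatives extending continuously to the closed edge, which for all 0 < t < T satisfies: (a) a^e ∂_t u^e + b^e ∂_x u^e − ε^e ∂_xx u^e ≥ 0 on each edge e; (b) u is continuous across vertices, i.e. for each vertex v there is û^v(t) with u^e(v,t) = û^v(t) for all e ∈ E(v); (c) ∑_{e∈E(v)} ε^e ∂_x u^e(v,t) n^e(v) = 0 at every inner vertex v ∈ V₀; (d) u(v,t) ≥ 0 at every boundary vertex v ∈ V∂; and (e) u^e(x,0) ≥ 0 for all x ∈ [0,ℓ^e] and all e ∈ E. Then u^e(x,t) ≥ 0 for all x ∈ [0,ℓ^e], all e ∈ E, and all t ∈ [0,T]. -/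
/-! For `δ > 0` and `t₁ < T`, the function `u + δ t` attains its minimum over the network
times `[0, t₁]`. If this minimum were negative, it would be attained at a time `t₀ > 0`, where
`∂ₜu ≤ -δ`. In space, `∂ₓu = 0` there: at an interior point of an edge by Fermat's rule, while a
boundary vertex is excluded by `u ≥ 0` and at an inner vertex every term of the Kirchhoff sum
`∑ εᵉ ∂ₓuᵉ nᵉ(v)` is nonpositive, hence zero. Then `∂ₓₓu ≥ 0`, and the differential inequality
fails. Letting `δ → 0` gives `u ≥ 0` on `[0, T)`, and continuity extends this to `t = T`. -/

open Set Finset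

/-- Coordinate of vertex `v` on edge `e`: `0` at the start vertex, `ℓ e` at the end vertex. -/
def endCoord {E V : Type} [DecidableEq V] (src : E → V) (ℓ : E → ℝ) (e : E) (v : V) : ℝ :=
  if src e = v then 0 else ℓ e

open Filter Topology

section OneSidedExtrema

variable {f g : ℝ → ℝ} {s : Set ℝ} {c d f' G : ℝ}

theorem IsMinOn.hasDerivWithinAt_nonneg_of_mem_nhdsGT (hmin : IsMinOn f s c)
    (hs : s ∈ 𝓝[>] c) (hf : HasDerivWithinAt f f' s c) : 0 ≤ f' := by
  have hslope := (hasDerivWithinAt_iff_tendsto_slope' Set.self_notMem_Ioi).1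
    (hf.mono_of_mem_nhdsWithin hs)
  refine ge_of_tendsto hslope ?_
  filter_upwards [self_mem_nhdsWithin, hs] with x hxc hxs
  rw [slope_def_field]
  exact div_nonneg (sub_nonneg.2 (hmin hxs)) (sub_nonneg.2 (le_of_lt hxc))

theorem IsMinOn.hasDerivWithinAt_nonpos_of_mem_nhdsLT (hmin : IsMinOn f s c)
    (hs : s ∈ 𝓝[<] c) (hf : HasDerivWithinAt f f' s c) : f' ≤ 0 := by
  have hslope := (hasDerivWithinAt_iff_tendsto_slope' Set.self_notMem_Iio).1
    (hf.mono_of_mem_nhdsWithin hs)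
  refine le_of_tendsto hslope ?_
  filter_upwards [self_mem_nhdsWithin, hs] with x hxc hxs
  rw [slope_def_field]
  exact div_nonpos_of_nonneg_of_nonpos (sub_nonneg.2 (hmin hxs)) (sub_nonpos.2 (le_of_lt hxc))

/- By the mean value theorem `g` takes a nonnegative value in every interval `(c, i)`, and there
the slope of `g` at `c` is nonnegative since `g c = 0`. -/
theorem IsMinOn.deriv_deriv_nonneg_right (hmin : IsMinOn f (Icc c d) c) (hcd : c < d)
    (hf : ContinuousOn f (Icc c d)) (hfg : ∀ x ∈ Ioo c d, HasDerivAt f (g x) x) (hg0 : g c = 0)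
    (hg : HasDerivWithinAt g G (Ioi c) c) : 0 ≤ G := by
  refine ge_of_tendsto_of_frequently
    ((hasDerivWithinAt_iff_tendsto_slope' Set.self_notMem_Ioi).1 hg)
    ((nhdsGT_basis c).frequently_iff.2 fun i hi => ?_)
  have hcd' : c < i ⊓ d := lt_inf_iff.2 ⟨hi, hcd⟩
  have hsub : Icc c (i ⊓ d) ⊆ Icc c d := Icc_subset_Icc_right inf_le_right
  obtain ⟨ξ, hξ, hgξ⟩ := exists_hasDerivAt_eq_slope f g hcd' (hf.mono hsub)
    fun x hx => hfg x (Ioo_subset_Ioo_right inf_le_right hx)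
  refine ⟨ξ, Ioo_subset_Ioo_right inf_le_left hξ, ?_⟩
  rw [slope_def_field, hg0, sub_zero, hgξ]
  exact div_nonneg (div_nonneg (sub_nonneg.2 (hmin (hsub (right_mem_Icc.2 hcd'.le))))
    (sub_nonneg.2 hcd'.le)) (sub_nonneg.2 hξ.1.le)

theorem IsMinOn.deriv_deriv_nonneg_left (hmin : IsMinOn f (Icc d c) c) (hdc : d < c)
    (hf : ContinuousOn f (Icc d c)) (hfg : ∀ x ∈ Ioo d c, HasDerivAt f (g x) x) (hg0 : g c = 0)
    (hg : HasDerivWithinAt g G (Iio c) c) : 0 ≤ G := by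
  refine ge_of_tendsto_of_frequently
    ((hasDerivWithinAt_iff_tendsto_slope' Set.self_notMem_Iio).1 hg)
    ((nhdsLT_basis c).frequently_iff.2 fun i hi => ?_)
  have hdc' : i ⊔ d < c := sup_lt_iff.2 ⟨hi, hdc⟩
  have hsub : Icc (i ⊔ d) c ⊆ Icc d c := Icc_subset_Icc_left le_sup_right
  obtain ⟨ξ, hξ, hgξ⟩ := exists_hasDerivAt_eq_slope f g hdc' (hf.mono hsub)
    fun x hx => hfg x (Ioo_subset_Ioo_left le_sup_right hx)
  refine ⟨ξ, Ioo_subset_Ioo_left le_sup_left hξ, ?_⟩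
  rw [slope_def_field, hg0, sub_zero, hgξ]
  exact div_nonneg_of_nonpos (div_nonpos_of_nonpos_of_nonneg
    (sub_nonpos.2 (hmin (hsub (left_mem_Icc.2 hdc'.le)))) (sub_nonneg.2 hdc'.le))
    (sub_nonpos.2 hξ.2.le)

theorem IsMinOn.deriv_deriv_nonneg_Icc {A B : ℝ} (hmin : IsMinOn f (Icc A B) c) (hAB : A < B)
    (hc : c ∈ Icc A B) (hf : ∀ x ∈ Icc A B, HasDerivWithinAt f (g x) (Icc A B) x)
    (hg0 : g c = 0) (hg : HasDerivWithinAt g G (Icc A B) c) : 0 ≤ G := by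
  have hcont : ContinuousOn f (Icc A B) := fun x hx => (hf x hx).continuousWithinAt
  have hfg : ∀ x ∈ Ioo A B, HasDerivAt f (g x) x := fun x hx =>
    (hf x (Ioo_subset_Icc_self hx)).hasDerivAt (Icc_mem_nhds hx.1 hx.2)
  rcases hc.2.lt_or_eq with hcB | rfl
  · have hsub : Icc c B ⊆ Icc A B := Icc_subset_Icc_left hc.1
    exact (hmin.on_subset hsub).deriv_deriv_nonneg_right hcB (hcont.mono hsub)
      (fun x hx => hfg x (Ioo_subset_Ioo_left hc.1 hx)) hg0
      (hg.mono_of_mem_nhdsWithin (Icc_mem_nhdsGT_of_mem ⟨hc.1, hcB⟩))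
  · exact hmin.deriv_deriv_nonneg_left hAB hcont hfg hg0
      (hg.mono_of_mem_nhdsWithin (Icc_mem_nhdsLT hAB))

end OneSidedExtrema

theorem exists_forall_le_of_isCompact {ι X α : Type*} [Finite ι] [Nonempty ι] [TopologicalSpace X]
    [LinearOrder α] [TopologicalSpace α] [ClosedIicTopology α] {K : ι → Set X} {f : ι → X → α}
    (hK : ∀ i, IsCompact (K i)) (hne : ∀ i, (K i).Nonempty) (hf : ∀ i, ContinuousOn (f i) (K i)) :
    ∃ i, ∃ p ∈ K i, ∀ j, ∀ q ∈ K j, f i p ≤ f j q := by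
  choose p hp hmin using fun i => (hK i).exists_isMinOn (hne i) (hf i)
  obtain ⟨i, hi⟩ := Finite.exists_min fun i => f i (p i)
  exact ⟨i, p i, hp i, fun j q hq => (hi j).trans (hmin j hq)⟩

theorem nonneg_of_forall_add_mul_nonneg {φ : ℝ → ℝ} {T : ℝ} (hT : 0 < T)
    (hφ : ContinuousOn φ (Icc 0 T)) (h : ∀ δ > 0, ∀ t ∈ Ico 0 T, 0 ≤ φ t + δ * t) :
    ∀ t ∈ Icc 0 T, 0 ≤ φ t := by
  have hIco : ∀ t ∈ Ico 0 T, 0 ≤ φ t := fun t ht => by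
    have hlim : Tendsto (fun δ : ℝ => φ t + δ * t) (𝓝[>] 0) (𝓝 (φ t)) :=
      ((by fun_prop : Continuous fun δ : ℝ => φ t + δ * t).tendsto' 0 (φ t) (by simp)).mono_left
        nhdsWithin_le_nhds
    exact ge_of_tendsto hlim (eventually_nhdsWithin_of_forall fun δ hδ => h δ hδ t ht)
  have hclosed : IsClosed (Icc 0 T ∩ φ ⁻¹' Ici 0) :=
    hφ.preimage_isClosed_of_isClosed isClosed_Icc isClosed_Ici
  intro t ht
  rw [← closure_Ico hT.ne] at ht
  exact (closure_minimal (t := Icc 0 T ∩ φ ⁻¹' Ici 0)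
    (fun s hs => ⟨Ico_subset_Icc_self hs, hIco s hs⟩) hclosed ht).2

section Network

variable {E V : Type} [DecidableEq V] {src tgt : E → V} {ℓ : E → ℝ} {e : E} {v : V}

theorem endCoord_of_src (h : src e = v) : endCoord src ℓ e v = 0 := if_pos h

theorem endCoord_of_tgt (hne : src e ≠ tgt e) (h : tgt e = v) : endCoord src ℓ e v = ℓ e :=
  if_neg (h ▸ hne)

theorem endCoord_mem_Icc (hℓ : 0 ≤ ℓ e) : endCoord src ℓ e v ∈ Icc 0 (ℓ e) := by
  unfold endCoord; split_ifs <;> simp [hℓ]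

theorem inc_of_src (hne : src e ≠ tgt e) (h : src e = v) : inc src tgt e v = -1 := by
  simp [inc, h, show tgt e ≠ v from h ▸ hne.symm]

theorem inc_of_tgt (hne : src e ≠ tgt e) (h : tgt e = v) : inc src tgt e v = 1 := by
  simp [inc, h, show src e ≠ v from h ▸ hne]

theorem inc_of_not_incident (h : ¬(src e = v ∨ tgt e = v)) : inc src tgt e v = 0 := by
  simp_all [inc]

theorem inc_ne_zero (hne : src e ≠ tgt e) (h : src e = v ∨ tgt e = v) : inc src tgt e v ≠ 0 := by
  rcases h with h | h
  · rw [inc_of_src hne h]; norm_num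
  · rw [inc_of_tgt hne h]; norm_num

theorem one_le_edgeDeg [Fintype E] (h : src e = v ∨ tgt e = v) : 1 ≤ edgeDeg src tgt v :=
  Finset.card_pos.2 ⟨e, Finset.mem_filter.2 ⟨Finset.mem_univ e, h⟩⟩

theorem exists_endCoord_eq_of_notMem_Ioo {x : ℝ} (hne : src e ≠ tgt e) (hx : x ∈ Icc 0 (ℓ e))
    (hx' : x ∉ Ioo 0 (ℓ e)) : ∃ v, (src e = v ∨ tgt e = v) ∧ endCoord src ℓ e v = x := by
  rcases hx.1.eq_or_lt with rfl | h0
  · exact ⟨src e, Or.inl rfl, endCoord_of_src rfl⟩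
  · obtain rfl : x = ℓ e := hx.2.antisymm (not_lt.1 fun h => hx' ⟨h0, h⟩)
    exact ⟨tgt e, Or.inr rfl, endCoord_of_tgt hne rfl⟩

theorem inc_mul_nonpos_of_isMinOn {f : ℝ → ℝ} {f' : ℝ} (hne : src e ≠ tgt e) (hℓ : 0 < ℓ e)
    (hv : src e = v ∨ tgt e = v) (hmin : IsMinOn f (Icc 0 (ℓ e)) (endCoord src ℓ e v))
    (hf : HasDerivWithinAt f f' (Icc 0 (ℓ e)) (endCoord src ℓ e v)) :
    inc src tgt e v * f' ≤ 0 := by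
  rcases hv with h | h
  · rw [endCoord_of_src h] at hmin hf
    have := hmin.hasDerivWithinAt_nonneg_of_mem_nhdsGT (Icc_mem_nhdsGT hℓ) hf
    rw [inc_of_src hne h]; linarith
  · rw [endCoord_of_tgt hne h] at hmin hf
    have := hmin.hasDerivWithinAt_nonpos_of_mem_nhdsLT (Icc_mem_nhdsLT hℓ) hf
    rw [inc_of_tgt hne h]; linarith

variable [Fintype E] {f f' : E → ℝ → ℝ} {fhat : V → ℝ} {eps : E → ℝ}

theorem hasDerivWithinAt_eq_zero_of_isMinOn_vertex (hne : ∀ e, src e ≠ tgt e)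
    (hℓ : ∀ e, 0 < ℓ e) (heps : ∀ e, 0 < eps e)
    (hf : ∀ e, HasDerivWithinAt (f e) (f' e (endCoord src ℓ e v)) (Icc 0 (ℓ e))
      (endCoord src ℓ e v))
    (hvertex : ∀ e, (src e = v ∨ tgt e = v) → f e (endCoord src ℓ e v) = fhat v)
    (hcoupling : 2 ≤ edgeDeg src tgt v →
      ∑ e, eps e * f' e (endCoord src ℓ e v) * inc src tgt e v = 0)
    (hbdry : edgeDeg src tgt v = 1 → 0 ≤ fhat v)
    (hmin : ∀ e, ∀ x ∈ Icc 0 (ℓ e), fhat v ≤ f e x) (hneg : fhat v < 0)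
    (he : src e = v ∨ tgt e = v) : f' e (endCoord src ℓ e v) = 0 := by
  rcases (one_le_edgeDeg he).eq_or_lt with hdeg | hdeg
  · exact absurd (hbdry hdeg.symm) hneg.not_ge
  have hterm : ∀ e' ∈ Finset.univ,
      eps e' * f' e' (endCoord src ℓ e' v) * inc src tgt e' v ≤ 0 := by
    intro e' _
    by_cases hv : src e' = v ∨ tgt e' = v
    · have hmin' : IsMinOn (f e') (Icc 0 (ℓ e')) (endCoord src ℓ e' v) :=
        isMinOn_iff.2 fun x hx => (hvertex e' hv).trans_le (hmin e' x hx)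
      have := inc_mul_nonpos_of_isMinOn (hne e') (hℓ e') hv hmin' (hf e')
      rw [mul_assoc, mul_comm (f' _ _)]
      exact mul_nonpos_of_nonneg_of_nonpos (heps e').le this
    · simp [inc_of_not_incident hv]
  have h0 := (Finset.sum_eq_zero_iff_of_nonpos hterm).1 (hcoupling hdeg) e (Finset.mem_univ e)
  simpa [(heps e).ne', inc_ne_zero (hne e) he] using h0

theorem hasDerivWithinAt_eq_zero_of_isMinOn_network {x₀ : ℝ} (hne : ∀ e, src e ≠ tgt e)
    (hℓ : ∀ e, 0 < ℓ e) (heps : ∀ e, 0 < eps e)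
    (hf : ∀ e, ∀ x ∈ Icc 0 (ℓ e), HasDerivWithinAt (f e) (f' e x) (Icc 0 (ℓ e)) x)
    (hvertex : ∀ v e, (src e = v ∨ tgt e = v) → f e (endCoord src ℓ e v) = fhat v)
    (hcoupling : ∀ v, 2 ≤ edgeDeg src tgt v →
      ∑ e, eps e * f' e (endCoord src ℓ e v) * inc src tgt e v = 0)
    (hbdry : ∀ v, edgeDeg src tgt v = 1 → 0 ≤ fhat v)
    (hx₀ : x₀ ∈ Icc 0 (ℓ e)) (hmin : ∀ e', ∀ x ∈ Icc 0 (ℓ e'), f e x₀ ≤ f e' x)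
    (hneg : f e x₀ < 0) : f' e x₀ = 0 := by
  by_cases hint : x₀ ∈ Ioo 0 (ℓ e)
  · have hloc : IsLocalMin (f e) x₀ :=
      (isMinOn_iff.2 (hmin e)).isLocalMin (Icc_mem_nhds hint.1 hint.2)
    exact hloc.hasDerivAt_eq_zero ((hf e x₀ hx₀).hasDerivAt (Icc_mem_nhds hint.1 hint.2))
  obtain ⟨v, he, rfl⟩ := exists_endCoord_eq_of_notMem_Ioo (hne e) hx₀ hint
  rw [hvertex v e he] at hmin hneg
  exact hasDerivWithinAt_eq_zero_of_isMinOn_vertex hne hℓ heps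
    (fun e => hf e _ (endCoord_mem_Icc (hℓ e).le)) (hvertex v) (hcoupling v) (hbdry v) hmin hneg he

end Network

theorem weak_maximum_principle_general
    (E V : Type) [Fintype E] [DecidableEq V]
    (src tgt : E → V) (hne : ∀ e, src e ≠ tgt e)
    (ℓ a b eps : E → ℝ) (T : ℝ) (hT : 0 < T)
    (hℓ : ∀ e, 0 < ℓ e) (ha : ∀ e, 0 < a e) (heps : ∀ e, 0 < eps e)
    (u ux uxx ut : E → ℝ → ℝ → ℝ) (uhat : V → ℝ → ℝ)
    (cont_u : ∀ e, ContinuousOn (fun p : ℝ × ℝ => u e p.1 p.2)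
      (Set.Icc 0 (ℓ e) ×ˢ Set.Icc 0 T))
    (hasDeriv_x : ∀ e, ∀ t ∈ Set.Icc (0 : ℝ) T, ∀ x ∈ Set.Icc (0 : ℝ) (ℓ e),
      HasDerivWithinAt (fun y => u e y t) (ux e x t) (Set.Icc 0 (ℓ e)) x)
    (hasDeriv_xx : ∀ e, ∀ t ∈ Set.Icc (0 : ℝ) T, ∀ x ∈ Set.Icc (0 : ℝ) (ℓ e),
      HasDerivWithinAt (fun y => ux e y t) (uxx e x t) (Set.Icc 0 (ℓ e)) x)
    (hasDeriv_t : ∀ e, ∀ x ∈ Set.Icc (0 : ℝ) (ℓ e), ∀ t ∈ Set.Icc (0 : ℝ) T,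
      HasDerivWithinAt (fun s => u e x s) (ut e x t) (Set.Icc 0 T) t)
    (hineq : ∀ e, ∀ x ∈ Set.Icc (0 : ℝ) (ℓ e), ∀ t ∈ Set.Ioo (0 : ℝ) T,
      0 ≤ a e * ut e x t + b e * ux e x t - eps e * uxx e x t)
    (hcont_vertex : ∀ (v : V) (e : E), (src e = v ∨ tgt e = v) → ∀ t ∈ Set.Ioo (0 : ℝ) T,
      u e (endCoord src ℓ e v) t = uhat v t)
    (hcoupling : ∀ v : V, 2 ≤ edgeDeg src tgt v → ∀ t ∈ Set.Ioo (0 : ℝ) T,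
      ∑ e, eps e * ux e (endCoord src ℓ e v) t * inc src tgt e v = 0)
    (hbdry : ∀ v : V, edgeDeg src tgt v = 1 → ∀ t ∈ Set.Ioo (0 : ℝ) T, 0 ≤ uhat v t)
    (hinit : ∀ e, ∀ x ∈ Set.Icc (0 : ℝ) (ℓ e), 0 ≤ u e x 0) :
    ∀ e, ∀ x ∈ Set.Icc (0 : ℝ) (ℓ e), ∀ t ∈ Set.Icc (0 : ℝ) T, 0 ≤ u e x t := by
  have perturbed : ∀ δ > 0, ∀ e, ∀ x ∈ Icc 0 (ℓ e), ∀ t ∈ Ico 0 T, 0 ≤ u e x t + δ * t := by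
    intro δ hδ e₁ x₁ hx₁ t₁ ht₁
    by_contra! hneg
    have : Nonempty E := ⟨e₁⟩
    obtain ⟨e, ⟨x₀, t₀⟩, ⟨hx₀, ht₀⟩, hmin⟩ := exists_forall_le_of_isCompact
      (K := fun e => Icc 0 (ℓ e) ×ˢ Icc 0 t₁) (f := fun e p => u e p.1 p.2 + δ * p.2)
      (fun _ => isCompact_Icc.prod isCompact_Icc)
      (fun e => ⟨(0, 0), left_mem_Icc.2 (hℓ e).le, left_mem_Icc.2 ht₁.1⟩)
      fun e => ((cont_u e).mono (prod_mono_right (Icc_subset_Icc_right ht₁.2.le))).add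
        (continuous_const.mul continuous_snd).continuousOn
    have hm : u e x₀ t₀ + δ * t₀ < 0 :=
      (hmin e₁ (x₁, t₁) ⟨hx₁, right_mem_Icc.2 ht₁.1⟩).trans_lt hneg
    have ht₀T : t₀ ∈ Ioo 0 T :=
      ⟨ht₀.1.lt_of_ne fun h => by subst h; linarith [hinit e x₀ hx₀], ht₀.2.trans_lt ht₁.2⟩
    have ht₀T' := Ioo_subset_Icc_self ht₀T
    have hut : ut e x₀ t₀ + δ * 1 ≤ 0 :=
      (isMinOn_iff.2 fun s hs => hmin e (x₀, s) ⟨hx₀, hs⟩).hasDerivWithinAt_nonpos_of_mem_nhdsLT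
        (Icc_mem_nhdsLT_of_mem ⟨ht₀T.1, ht₀.2⟩) <|
        ((hasDeriv_t e x₀ hx₀ t₀ ht₀T').mono (Icc_subset_Icc_right ht₁.2.le)).add
          ((hasDerivWithinAt_id _ _).const_mul δ)
    have hslice : ∀ e', ∀ x ∈ Icc 0 (ℓ e'), u e x₀ t₀ ≤ u e' x t₀ := fun e' x hx => by
      linarith [hmin e' (x, t₀) ⟨hx, ht₀⟩]
    have hux : ux e x₀ t₀ = 0 := hasDerivWithinAt_eq_zero_of_isMinOn_network
      (f := fun e x => u e x t₀) (f' := fun e x => ux e x t₀) hne hℓ heps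
      (fun e => hasDeriv_x e t₀ ht₀T') (fun v e he => hcont_vertex v e he t₀ ht₀T)
      (fun v hv => hcoupling v hv t₀ ht₀T) (fun v hv => hbdry v hv t₀ ht₀T) hx₀ hslice
      (by nlinarith [mul_pos hδ ht₀T.1])
    have huxx : 0 ≤ uxx e x₀ t₀ := (isMinOn_iff.2 (hslice e)).deriv_deriv_nonneg_Icc (hℓ e) hx₀
      (hasDeriv_x e t₀ ht₀T') hux (hasDeriv_xx e t₀ ht₀T' x₀ hx₀)
    have hpde := hineq e x₀ hx₀ t₀ ht₀T
    rw [hux, mul_zero, add_zero] at hpde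
    nlinarith [mul_pos (ha e) hδ, mul_nonneg (heps e).le huxx,
      mul_le_mul_of_nonneg_left hut (ha e).le]
  intro e x hx
  exact nonneg_of_forall_add_mul_nonneg hT
    (fun t ht => (hasDeriv_t e x hx t ht).continuousWithinAt) fun δ hδ => perturbed δ hδ e x hx

/-- **Lemma 3.1 (weak maximum principle on networks).**  If a family `u = (uᵉ)` of
sufficiently smooth functions satisfies the differential inequality
`aᵉ ∂ₜuᵉ + bᵉ ∂ₓuᵉ − εᵉ ∂ₓₓuᵉ ≥ 0` on every edge, is continuous across vertices,
satisfies `∑_{e ∈ E(v)} εᵉ ∂ₓuᵉ(v) nᵉ(v) = 0` at inner vertices, is nonnegative at the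
boundary vertices, and has nonnegative initial values, then `u ≥ 0` on the whole network
for all `t ∈ [0,T]`. -/
theorem weak_maximum_principle
    (E V : Type) [Fintype E] [Fintype V] [DecidableEq E] [DecidableEq V]
    (src tgt : E → V) (hne : ∀ e, src e ≠ tgt e)
    (ℓ a b eps : E → ℝ) (T : ℝ) (hT : 0 < T)
    (hℓ : ∀ e, 0 < ℓ e) (ha : ∀ e, 0 < a e) (hb : ∀ e, 0 < b e) (heps : ∀ e, 0 < eps e)
    (hdeg : ∀ v : V, 1 ≤ edgeDeg src tgt v)
    (hflow : ∀ v : V, 2 ≤ edgeDeg src tgt v → ∑ e, b e * inc src tgt e v = 0)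
    (u ux uxx ut : E → ℝ → ℝ → ℝ) (uhat : V → ℝ → ℝ)
    (cont_u : ∀ e, ContinuousOn (fun p : ℝ × ℝ => u e p.1 p.2)
      (Set.Icc 0 (ℓ e) ×ˢ Set.Icc 0 T))
    (cont_ux : ∀ e, ContinuousOn (fun p : ℝ × ℝ => ux e p.1 p.2)
      (Set.Icc 0 (ℓ e) ×ˢ Set.Icc 0 T))
    (cont_uxx : ∀ e, ContinuousOn (fun p : ℝ × ℝ => uxx e p.1 p.2)
      (Set.Icc 0 (ℓ e) ×ˢ Set.Icc 0 T))
    (cont_ut : ∀ e, ContinuousOn (fun p : ℝ × ℝ => ut e p.1 p.2)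
      (Set.Icc 0 (ℓ e) ×ˢ Set.Icc 0 T))
    (hasDeriv_x : ∀ e, ∀ t ∈ Set.Icc (0 : ℝ) T, ∀ x ∈ Set.Icc (0 : ℝ) (ℓ e),
      HasDerivWithinAt (fun y => u e y t) (ux e x t) (Set.Icc 0 (ℓ e)) x)
    (hasDeriv_xx : ∀ e, ∀ t ∈ Set.Icc (0 : ℝ) T, ∀ x ∈ Set.Icc (0 : ℝ) (ℓ e),
      HasDerivWithinAt (fun y => ux e y t) (uxx e x t) (Set.Icc 0 (ℓ e)) x)
    (hasDeriv_t : ∀ e, ∀ x ∈ Set.Icc (0 : ℝ) (ℓ e), ∀ t ∈ Set.Icc (0 : ℝ) T,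
      HasDerivWithinAt (fun s => u e x s) (ut e x t) (Set.Icc 0 T) t)
    (hineq : ∀ e, ∀ x ∈ Set.Icc (0 : ℝ) (ℓ e), ∀ t ∈ Set.Ioo (0 : ℝ) T,
      0 ≤ a e * ut e x t + b e * ux e x t - eps e * uxx e x t)
    (hcont_vertex : ∀ (v : V) (e : E), (src e = v ∨ tgt e = v) → ∀ t ∈ Set.Ioo (0 : ℝ) T,
      u e (endCoord src ℓ e v) t = uhat v t)
    (hcoupling : ∀ v : V, 2 ≤ edgeDeg src tgt v → ∀ t ∈ Set.Ioo (0 : ℝ) T,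
      ∑ e, eps e * ux e (endCoord src ℓ e v) t * inc src tgt e v = 0)
    (hbdry : ∀ v : V, edgeDeg src tgt v = 1 → ∀ t ∈ Set.Ioo (0 : ℝ) T, 0 ≤ uhat v t)
    (hinit : ∀ e, ∀ x ∈ Set.Icc (0 : ℝ) (ℓ e), 0 ≤ u e x 0) :
    ∀ e, ∀ x ∈ Set.Icc (0 : ℝ) (ℓ e), ∀ t ∈ Set.Icc (0 : ℝ) T, 0 ≤ u e x t :=
  weak_maximum_principle_general E V src tgt hne ℓ a b eps T hT hℓ ha heps u ux uxx ut uhat cont_u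
    hasDeriv_x hasDeriv_xx hasDeriv_t hineq hcont_vertex hcoupling hbdry hinit
end

section
/- Uniform bound on the spatial derivative at inflow endpoints (Lemma 3.3): Under the hypotheses of Lemma 3.2, there exists a constant K, independent of the edge e ∈ E and of the diffusion coefficients ε^e ∈ (0,1], such that the classical solution u_ε of the convection–diffusion network problem satisfies |∂_x u_ε^e(0,t)| ≤ K for every edge e ∈ E (where x = 0 is the start/inflow vertex of e) and all t ∈ (0,T). The constant K can be taken as any number with K ≥ (a^e/b^e)C_u for all e, K ≥ max_{x∈E} |∂_x u₀(x)|, and K ≥ 2C_u/min_{e∈E} ℓ^e, where C_u is the uniform bound on |u_ε| + |∂_t u_ε| from Lemma 3.2. -/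
/-!
Barrier argument. Fix an edge, `σ = ±1` and `K' > K`, and put
`w(x,t) = σ (u(x,t) - u(0,t)) - K' x`. The `x`-independent term `u(0,t)` only contributes
`-σ a ∂ₜu(0,t)` to `a ∂ₜw + b ∂ₓw - ε ∂ₓₓw`, so by the equation this is at most
`a C_u - b K' < 0`; and `w ≤ 0` on the parabolic boundary: at `t = 0` because `K` bounds `u₀'`,
at `x = 0` trivially, at `x = ℓ` because `K ℓ ≥ 2 C_u`. The weak maximum principle gives
`w ≤ 0`, and as `w(0,t) = 0` the one-sided derivative `σ ∂ₓu(0,t) - K'` at `x = 0` is `≤ 0`.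
Nothing depends on `ε`.
-/

open Set Finset

/-- A classical solution of the convection–diffusion problem on the network with edges `E`,
vertices `V`, edge lengths `ℓ`, coefficients `a`, `b`, diffusion `eps`, time horizon `T`,
initial data `u0` and boundary data `g`.  The fields `ux`, `uxx`, `ut` are the spatial and
temporal derivatives of `u`, and `uhat` are the common nodal values. -/
structure CDSol (E V : Type) [Fintype E] [Fintype V] [DecidableEq E] [DecidableEq V]
    (src tgt : E → V) (ℓ a b eps : E → ℝ) (T : ℝ)
    (u0 : E → ℝ → ℝ) (g : V → ℝ → ℝ) : Type where
  u : E → ℝ → ℝ → ℝ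
  ux : E → ℝ → ℝ → ℝ
  uxx : E → ℝ → ℝ → ℝ
  ut : E → ℝ → ℝ → ℝ
  uhat : V → ℝ → ℝ
  cont_u : ∀ e, ContinuousOn (fun p : ℝ × ℝ => u e p.1 p.2) (Set.Icc 0 (ℓ e) ×ˢ Set.Icc 0 T)
  cont_ux : ∀ e, ContinuousOn (fun p : ℝ × ℝ => ux e p.1 p.2) (Set.Icc 0 (ℓ e) ×ˢ Set.Icc 0 T)
  cont_uxx : ∀ e, ContinuousOn (fun p : ℝ × ℝ => uxx e p.1 p.2) (Set.Icc 0 (ℓ e) ×ˢ Set.Icc 0 T)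
  cont_ut : ∀ e, ContinuousOn (fun p : ℝ × ℝ => ut e p.1 p.2) (Set.Icc 0 (ℓ e) ×ˢ Set.Icc 0 T)
  hasDeriv_x : ∀ e, ∀ t ∈ Set.Icc (0 : ℝ) T, ∀ x ∈ Set.Icc (0 : ℝ) (ℓ e),
      HasDerivWithinAt (fun y => u e y t) (ux e x t) (Set.Icc 0 (ℓ e)) x
  hasDeriv_xx : ∀ e, ∀ t ∈ Set.Icc (0 : ℝ) T, ∀ x ∈ Set.Icc (0 : ℝ) (ℓ e),
      HasDerivWithinAt (fun y => ux e y t) (uxx e x t) (Set.Icc 0 (ℓ e)) x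
  hasDeriv_t : ∀ e, ∀ x ∈ Set.Icc (0 : ℝ) (ℓ e), ∀ t ∈ Set.Icc (0 : ℝ) T,
      HasDerivWithinAt (fun s => u e x s) (ut e x t) (Set.Icc 0 T) t
  pde : ∀ e, ∀ x ∈ Set.Icc (0 : ℝ) (ℓ e), ∀ t ∈ Set.Icc (0 : ℝ) T,
      a e * ut e x t + b e * ux e x t = eps e * uxx e x t
  vertex_continuity : ∀ (v : V) (e : E), (src e = v ∨ tgt e = v) → ∀ t ∈ Set.Icc (0 : ℝ) T,
      u e (endCoord src ℓ e v) t = uhat v t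
  coupling : ∀ v : V, 2 ≤ edgeDeg src tgt v → ∀ t ∈ Set.Icc (0 : ℝ) T,
      ∑ e, (b e * u e (endCoord src ℓ e v) t - eps e * ux e (endCoord src ℓ e v) t)
        * inc src tgt e v = 0
  bdry : ∀ v : V, edgeDeg src tgt v = 1 → ∀ t ∈ Set.Icc (0 : ℝ) T, uhat v t = g v t
  init : ∀ e, ∀ x ∈ Set.Icc (0 : ℝ) (ℓ e), u e x 0 = u0 e x

open Filter Topology

theorem IsLocalMaxOn.sub_mul_nonpos_of_hasDerivWithinAt {f : ℝ → ℝ} {s : Set ℝ} {a y f' : ℝ}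
    (h : IsLocalMaxOn f s a) (hf : HasDerivWithinAt f f' s a) (hy : segment ℝ a y ⊆ s) :
    (y - a) * f' ≤ 0 := by
  simpa [mul_comm] using
    h.hasFDerivWithinAt_nonpos hf.hasFDerivWithinAt (sub_mem_posTangentConeAt_of_segment_subset hy)

/-- If `f'' > 0` the second derivative test makes `x₀` also a local minimum, so `f` is locally
constant and `f'' = 0`. -/
theorem IsLocalMax.hasDerivAt_deriv_nonpos {f f' : ℝ → ℝ} {x₀ f'' : ℝ} (hmax : IsLocalMax f x₀)
    (hf : ∀ᶠ y in 𝓝 x₀, HasDerivAt f (f' y) y) (hf' : HasDerivAt f' f'' x₀) : f'' ≤ 0 := by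
  by_contra! hpos
  have hderiv : deriv f =ᶠ[𝓝 x₀] f' := hf.mono fun y hy => hy.deriv
  have hmin : IsLocalMin f x₀ :=
    isLocalMin_of_deriv_deriv_pos (by rwa [hderiv.deriv_eq, hf'.deriv])
      (by rw [hderiv.eq_of_nhds, hmax.hasDerivAt_eq_zero hf.self_of_nhds])
      hf.self_of_nhds.continuousAt
  have hconst : ∀ᶠ y in 𝓝 x₀, f y = f x₀ :=
    (hmax.and hmin).mono fun y hy => le_antisymm hy.1 hy.2
  have hzero : f' =ᶠ[𝓝 x₀] fun _ => 0 := by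
    filter_upwards [hf, hconst.eventually_nhds] with y hy hc
    exact hy.unique ((hasDerivAt_const y (f x₀)).congr_of_eventuallyEq hc)
  exact hpos.ne' ((hf'.congr_of_eventuallyEq hzero.symm).unique (hasDerivAt_const x₀ 0))

theorem nonpos_of_parabolic_boundary_nonpos {L T a b ε : ℝ} (ha : 0 ≤ a) (hε : 0 ≤ ε)
    {w wx wxx wt : ℝ → ℝ → ℝ}
    (hw : ContinuousOn (fun p : ℝ × ℝ => w p.1 p.2) (Icc 0 L ×ˢ Icc 0 T))
    (hwx : ∀ x ∈ Ioo 0 L, ∀ t ∈ Ioc 0 T, HasDerivAt (fun y => w y t) (wx x t) x)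
    (hwxx : ∀ x ∈ Ioo 0 L, ∀ t ∈ Ioc 0 T, HasDerivAt (fun y => wx y t) (wxx x t) x)
    (hwt : ∀ x ∈ Ioo 0 L, ∀ t ∈ Ioc 0 T,
      HasDerivWithinAt (fun s => w x s) (wt x t) (Icc 0 T) t)
    (hop : ∀ x ∈ Ioo 0 L, ∀ t ∈ Ioc 0 T, a * wt x t + b * wx x t - ε * wxx x t < 0)
    (hinit : ∀ x ∈ Icc 0 L, w x 0 ≤ 0) (hleft : ∀ t ∈ Icc 0 T, w 0 t ≤ 0)
    (hright : ∀ t ∈ Icc 0 T, w L t ≤ 0) :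
    ∀ x ∈ Icc 0 L, ∀ t ∈ Icc 0 T, w x t ≤ 0 := by
  intro x hx t ht
  obtain ⟨⟨x₀, t₀⟩, ⟨hx₀, ht₀⟩, hmax⟩ :=
    (isCompact_Icc.prod isCompact_Icc).exists_isMaxOn ⟨(x, t), hx, ht⟩ hw
  replace hmax : ∀ y ∈ Icc 0 L, ∀ s ∈ Icc 0 T, w y s ≤ w x₀ t₀ :=
    fun y hy s hs => isMaxOn_iff.mp hmax (y, s) ⟨hy, hs⟩
  refine (hmax x hx t ht).trans (not_lt.mp fun hpos => ?_)
  have hx₀' : x₀ ∈ Ioo 0 L := by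
    refine ⟨hx₀.1.lt_of_ne ?_, hx₀.2.lt_of_ne ?_⟩ <;> rintro rfl
    exacts [(hleft t₀ ht₀).not_gt hpos, (hright t₀ ht₀).not_gt hpos]
  have ht₀' : t₀ ∈ Ioc 0 T :=
    ⟨ht₀.1.lt_of_ne (by rintro rfl; exact (hinit x₀ hx₀).not_gt hpos), ht₀.2⟩
  have hmax_x : IsLocalMax (fun y => w y t₀) x₀ :=
    IsMaxOn.isLocalMax (fun y hy => hmax y hy t₀ ht₀) (Icc_mem_nhds hx₀'.1 hx₀'.2)
  have hmax_t : IsLocalMaxOn (fun s => w x₀ s) (Icc 0 T) t₀ :=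
    IsMaxOn.localize fun s hs => hmax x₀ hx₀ s hs
  have hwt_nonneg : 0 ≤ wt x₀ t₀ := by
    have := hmax_t.sub_mul_nonpos_of_hasDerivWithinAt (hwt x₀ hx₀' t₀ ht₀')
      ((convex_Icc 0 T).segment_subset ht₀ (left_mem_Icc.mpr (ht₀.1.trans ht₀.2)))
    nlinarith [ht₀'.1]
  have hwx_zero : wx x₀ t₀ = 0 := hmax_x.hasDerivAt_eq_zero (hwx x₀ hx₀' t₀ ht₀')
  have hwxx_nonpos : wxx x₀ t₀ ≤ 0 := by
    refine hmax_x.hasDerivAt_deriv_nonpos ?_ (hwxx x₀ hx₀' t₀ ht₀')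
    filter_upwards [Ioo_mem_nhds hx₀'.1 hx₀'.2] with y hy using hwx y hy t₀ ht₀'
  have := hop x₀ hx₀' t₀ ht₀'
  rw [hwx_zero] at this
  nlinarith [mul_nonneg ha hwt_nonneg, mul_nonpos_of_nonneg_of_nonpos hε hwxx_nonpos]

theorem mul_le_abs_of_abs_le_one {σ : ℝ} (hσ : |σ| ≤ 1) (y : ℝ) : σ * y ≤ |y| :=
  (le_abs_self _).trans (by rw [abs_mul]; exact mul_le_of_le_one_left (abs_nonneg y) hσ)

theorem ContDiffOn.exists_abs_derivWithin_le {f : ℝ → ℝ} {n : WithTop ℕ∞} {a b : ℝ}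
    (hf : ContDiffOn ℝ n f (Icc a b)) (hn : 1 ≤ n) (hab : a < b) :
    ∃ M, ∀ x ∈ Icc a b, |derivWithin f (Icc a b) x| ≤ M :=
  isCompact_Icc.exists_bound_of_continuousOn (hf.continuousOn_derivWithin (uniqueDiffOn_Icc hab) hn)

theorem abs_sub_left_le_mul_of_abs_derivWithin_le {f : ℝ → ℝ} {L K : ℝ}
    (hf : DifferentiableOn ℝ f (Icc 0 L)) (hK : ∀ x ∈ Icc 0 L, |derivWithin f (Icc 0 L) x| ≤ K) :
    ∀ x ∈ Icc 0 L, |f x - f 0| ≤ K * x := fun x hx => by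
  simpa [abs_of_nonneg hx.1] using (convex_Icc 0 L).norm_image_sub_le_of_norm_derivWithin_le hf hK
    (left_mem_Icc.mpr (hx.1.trans hx.2)) hx

namespace CDSol

variable {E V : Type} [Fintype E] [Fintype V] [DecidableEq E] [DecidableEq V] {src tgt : E → V}
  {ℓ a b eps : E → ℝ} {T : ℝ} {u0 : E → ℝ → ℝ} {g : V → ℝ → ℝ}
  (sol : CDSol E V src tgt ℓ a b eps T u0 g)

def barrier (e : E) (σ K x t : ℝ) : ℝ :=
  σ * (sol.u e x t - sol.u e 0 t) - K * x

variable {sol}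

theorem continuousOn_barrier {e : E} (hℓ : 0 ≤ ℓ e) (σ K : ℝ) :
    ContinuousOn (fun p : ℝ × ℝ => sol.barrier e σ K p.1 p.2) (Icc 0 (ℓ e) ×ˢ Icc 0 T) := by
  have hu0 : ContinuousOn (fun p : ℝ × ℝ => sol.u e 0 p.2) (Icc 0 (ℓ e) ×ˢ Icc 0 T) :=
    (sol.cont_u e).comp (continuous_const.prodMk continuous_snd).continuousOn
      fun p hp => ⟨left_mem_Icc.mpr hℓ, hp.2⟩
  exact (continuousOn_const.mul ((sol.cont_u e).sub hu0)).sub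
    (continuousOn_const.mul continuous_fst.continuousOn)

theorem hasDerivWithinAt_barrier_x {e : E} (σ K : ℝ) {x t : ℝ} (hx : x ∈ Icc 0 (ℓ e))
    (ht : t ∈ Icc 0 T) :
    HasDerivWithinAt (fun y => sol.barrier e σ K y t) (σ * sol.ux e x t - K) (Icc 0 (ℓ e)) x := by
  have hw := ((sol.hasDeriv_x e t ht x hx).sub_const (sol.u e 0 t)).const_mul σ |>.sub
    ((hasDerivWithinAt_id x (Icc 0 (ℓ e))).const_mul K)
  rwa [mul_one] at hw

theorem barrier_nonpos {e : E} (hℓ : 0 ≤ ℓ e) (ha : 0 ≤ a e) (heps : 0 ≤ eps e) {Cu K σ : ℝ}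
    (hσ : |σ| ≤ 1)
    (hCu : ∀ x ∈ Icc 0 (ℓ e), ∀ t ∈ Icc 0 T, |sol.u e x t| + |sol.ut e x t| ≤ Cu)
    (hKa : a e * Cu < b e * K) (hK0 : ∀ x ∈ Icc 0 (ℓ e), σ * (u0 e x - u0 e 0) ≤ K * x)
    (hKℓ : 2 * Cu ≤ K * ℓ e) :
    ∀ x ∈ Icc 0 (ℓ e), ∀ t ∈ Icc 0 T, sol.barrier e σ K x t ≤ 0 := by
  have h0 : (0 : ℝ) ∈ Icc 0 (ℓ e) := left_mem_Icc.mpr hℓ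
  have hu (y) (hy : y ∈ Icc 0 (ℓ e)) (s) (hs : s ∈ Icc 0 T) : |sol.u e y s| ≤ Cu := by
    linarith [hCu y hy s hs, abs_nonneg (sol.ut e y s)]
  have hut (s) (hs : s ∈ Icc 0 T) : -(σ * sol.ut e 0 s) ≤ Cu := by
    linarith [mul_le_abs_of_abs_le_one hσ (-sol.ut e 0 s), abs_neg (sol.ut e 0 s), hCu 0 h0 s hs,
      abs_nonneg (sol.u e 0 s)]
  refine nonpos_of_parabolic_boundary_nonpos (wx := fun x s => σ * sol.ux e x s - K)
    (wxx := fun x s => σ * sol.uxx e x s) (wt := fun x s => σ * (sol.ut e x s - sol.ut e 0 s))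
    (b := b e) ha heps (continuousOn_barrier hℓ σ K) ?_ ?_ ?_ ?_ ?_ ?_ ?_
  · exact fun y hy s hs => (hasDerivWithinAt_barrier_x σ K (Ioo_subset_Icc_self hy)
      (Ioc_subset_Icc_self hs)).hasDerivAt (Icc_mem_nhds hy.1 hy.2)
  · exact fun y hy s hs => (((sol.hasDeriv_xx e s (Ioc_subset_Icc_self hs) y
      (Ioo_subset_Icc_self hy)).hasDerivAt (Icc_mem_nhds hy.1 hy.2)).const_mul σ).sub_const K
  · intro y hy s hs
    have hs' := Ioc_subset_Icc_self hs
    exact (((sol.hasDeriv_t e y (Ioo_subset_Icc_self hy) s hs').sub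
      (sol.hasDeriv_t e 0 h0 s hs')).const_mul σ).sub_const (K * y)
  · intro y hy s hs
    have hs' := Ioc_subset_Icc_self hs
    have hpde := sol.pde e y (Ioo_subset_Icc_self hy) s hs'
    linear_combination σ * hpde + mul_le_mul_of_nonneg_left (hut s hs') ha + hKa
  · intro y hy
    simp only [barrier, sol.init e y hy, sol.init e 0 h0]
    linarith [hK0 y hy]
  · simp [barrier]
  · intro s hs
    simp only [barrier]
    linarith [mul_le_abs_of_abs_le_one hσ (sol.u e (ℓ e) s - sol.u e 0 s),
      abs_sub (sol.u e (ℓ e) s) (sol.u e 0 s), hu (ℓ e) (right_mem_Icc.mpr hℓ) s hs, hu 0 h0 s hs]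

theorem mul_ux_zero_le {e : E} (hℓ : 0 < ℓ e) (ha : 0 ≤ a e) (heps : 0 ≤ eps e) {Cu K σ : ℝ}
    (hσ : |σ| ≤ 1)
    (hCu : ∀ x ∈ Icc 0 (ℓ e), ∀ t ∈ Icc 0 T, |sol.u e x t| + |sol.ut e x t| ≤ Cu)
    (hKa : a e * Cu < b e * K) (hK0 : ∀ x ∈ Icc 0 (ℓ e), σ * (u0 e x - u0 e 0) ≤ K * x)
    (hKℓ : 2 * Cu ≤ K * ℓ e) {t : ℝ} (ht : t ∈ Icc 0 T) :
    σ * sol.ux e 0 t ≤ K := by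
  have h0 : (0 : ℝ) ∈ Icc 0 (ℓ e) := left_mem_Icc.mpr hℓ.le
  have hmax : IsLocalMaxOn (fun x => sol.barrier e σ K x t) (Icc 0 (ℓ e)) 0 :=
    IsMaxOn.localize fun x hx => by
      simpa [barrier] using barrier_nonpos hℓ.le ha heps hσ hCu hKa hK0 hKℓ x hx t ht
  have := hmax.sub_mul_nonpos_of_hasDerivWithinAt (hasDerivWithinAt_barrier_x σ K h0 ht)
    ((convex_Icc 0 (ℓ e)).segment_subset h0 (right_mem_Icc.mpr hℓ.le))
  nlinarith

theorem abs_ux_zero_le {e : E} (hℓ : 0 < ℓ e) (ha : 0 ≤ a e) (hb : 0 < b e) (heps : 0 ≤ eps e)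
    {Cu K : ℝ} (hCu : ∀ x ∈ Icc 0 (ℓ e), ∀ t ∈ Icc 0 T, |sol.u e x t| + |sol.ut e x t| ≤ Cu)
    (hKa : a e * Cu ≤ b e * K) (hK0 : ∀ x ∈ Icc 0 (ℓ e), |u0 e x - u0 e 0| ≤ K * x)
    (hKℓ : 2 * Cu ≤ K * ℓ e) {t : ℝ} (ht : t ∈ Icc 0 T) :
    |sol.ux e 0 t| ≤ K := by
  -- `K + δ` makes the operator inequality of `barrier_nonpos` strict.
  have hσ (σ : ℝ) (hσ : |σ| ≤ 1) : σ * sol.ux e 0 t ≤ K := by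
    refine le_of_forall_pos_le_add fun δ hδ => mul_ux_zero_le hℓ ha heps hσ hCu
      (by nlinarith) (fun x hx => ?_) (by nlinarith) ht
    nlinarith [mul_le_abs_of_abs_le_one hσ (u0 e x - u0 e 0), hK0 x hx, hx.1]
  exact abs_le.mpr ⟨by linarith [hσ (-1) (by simp)], by simpa using hσ 1 (by simp)⟩

end CDSol

theorem cd_inflow_derivative_bound_general
    (E V : Type) [Fintype E] [Fintype V] [DecidableEq E] [DecidableEq V]
    (src tgt : E → V)
    (ℓ a b : E → ℝ) (T : ℝ)
    (hℓ : ∀ e, 0 < ℓ e) (ha : ∀ e, 0 < a e) (hb : ∀ e, 0 < b e)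
    (u0 : E → ℝ → ℝ) (hu0 : ∀ e, ContDiffOn ℝ 2 (u0 e) (Set.Icc 0 (ℓ e)))
    (g : V → ℝ → ℝ)
    (Cu : ℝ)
    (hCu : ∀ eps : E → ℝ, (∀ e, 0 < eps e ∧ eps e ≤ 1) →
      ∀ sol : CDSol E V src tgt ℓ a b eps T u0 g,
        ∀ e, ∀ x ∈ Set.Icc (0 : ℝ) (ℓ e), ∀ t ∈ Set.Icc (0 : ℝ) T,
          |sol.u e x t| + |sol.ut e x t| ≤ Cu) :
    (∃ K : ℝ, ∀ eps : E → ℝ, (∀ e, 0 < eps e ∧ eps e ≤ 1) →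
      ∀ sol : CDSol E V src tgt ℓ a b eps T u0 g,
        ∀ e, ∀ t ∈ Set.Ioo (0 : ℝ) T, |sol.ux e 0 t| ≤ K) ∧
    (∀ K : ℝ, (∀ e, a e / b e * Cu ≤ K) →
      (∀ e, ∀ x ∈ Set.Icc (0 : ℝ) (ℓ e),
        |derivWithin (u0 e) (Set.Icc 0 (ℓ e)) x| ≤ K) →
      (∀ e, 2 * Cu / ℓ e ≤ K) →
      ∀ eps : E → ℝ, (∀ e, 0 < eps e ∧ eps e ≤ 1) →
        ∀ sol : CDSol E V src tgt ℓ a b eps T u0 g,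
          ∀ e, ∀ t ∈ Set.Ioo (0 : ℝ) T, |sol.ux e 0 t| ≤ K) := by
  refine (fun hbound => ⟨?_, hbound⟩) fun K hKa hK0 hKℓ eps heps sol e t ht => ?_
  · refine sol.abs_ux_zero_le (hℓ e) (ha e).le (hb e) (heps e).1.le (hCu eps heps sol e) ?_
      (abs_sub_left_le_mul_of_abs_derivWithin_le ((hu0 e).differentiableOn two_ne_zero) (hK0 e))
      ?_ (Ioo_subset_Icc_self ht)
    · rw [← div_le_iff₀' (hb e), ← div_mul_eq_mul_div]
      exact hKa e
    · rw [← div_le_iff₀ (hℓ e)]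
      exact hKℓ e
  · choose M hM using fun e => (hu0 e).exists_abs_derivWithin_le one_le_two (hℓ e)
    obtain ⟨K, hK⟩ := Finite.exists_le fun e => max (a e / b e * Cu) (max (M e) (2 * Cu / ℓ e))
    refine ⟨K, hbound K (fun e => ?_) (fun e x hx => ?_) (fun e => ?_)⟩
    · exact (le_max_left _ _).trans (hK e)
    · exact (hM e x hx).trans ((le_max_left _ _).trans ((le_max_right _ _).trans (hK e)))
    · exact (le_max_right _ _).trans ((le_max_right _ _).trans (hK e))

/-- **Lemma 3.3 (uniform bound on the spatial derivative at inflow endpoints).**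
Under the hypotheses of Lemma 3.2, with `C_u` the uniform bound on `|u_ε| + |∂ₜ u_ε|`:
there is a constant `K`, independent of the edge and of the diffusion coefficients
`ε ∈ (0,1]`, with `|∂ₓ u_ε^e(0,t)| ≤ K` for every edge `e` and all `t ∈ (0,T)`;
moreover any `K` with `K ≥ (aᵉ/bᵉ)C_u` for all `e`, `K ≥ max |∂ₓ u₀|` and
`K ≥ 2 C_u / min ℓᵉ` works. -/
theorem cd_inflow_derivative_bound
    (E V : Type) [Fintype E] [Fintype V] [DecidableEq E] [DecidableEq V] [Nonempty E]
    (src tgt : E → V) (hne : ∀ e, src e ≠ tgt e)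
    (ℓ a b : E → ℝ) (T : ℝ) (hT : 0 < T)
    (hℓ : ∀ e, 0 < ℓ e) (ha : ∀ e, 0 < a e) (hb : ∀ e, 0 < b e)
    (hdeg : ∀ v : V, 1 ≤ edgeDeg src tgt v)
    (hflow : ∀ v : V, 2 ≤ edgeDeg src tgt v → ∑ e, b e * inc src tgt e v = 0)
    (u0 : E → ℝ → ℝ) (hu0 : ∀ e, ContDiffOn ℝ 2 (u0 e) (Set.Icc 0 (ℓ e)))
    (uhat0 : V → ℝ)
    (hu0cont : ∀ (v : V) (e : E), (src e = v ∨ tgt e = v) →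
      u0 e (endCoord src ℓ e v) = uhat0 v)
    (g : V → ℝ → ℝ) (hg : ∀ v, ContDiffOn ℝ 2 (g v) (Set.Icc 0 T))
    (hcompat : ∀ v : V, edgeDeg src tgt v = 1 → g v 0 = uhat0 v)
    (Cu : ℝ)
    (hCu : ∀ eps : E → ℝ, (∀ e, 0 < eps e ∧ eps e ≤ 1) →
      ∀ sol : CDSol E V src tgt ℓ a b eps T u0 g,
        ∀ e, ∀ x ∈ Set.Icc (0 : ℝ) (ℓ e), ∀ t ∈ Set.Icc (0 : ℝ) T,
          |sol.u e x t| + |sol.ut e x t| ≤ Cu) :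
    (∃ K : ℝ, ∀ eps : E → ℝ, (∀ e, 0 < eps e ∧ eps e ≤ 1) →
      ∀ sol : CDSol E V src tgt ℓ a b eps T u0 g,
        ∀ e, ∀ t ∈ Set.Ioo (0 : ℝ) T, |sol.ux e 0 t| ≤ K) ∧
    (∀ K : ℝ, (∀ e, a e / b e * Cu ≤ K) →
      (∀ e, ∀ x ∈ Set.Icc (0 : ℝ) (ℓ e),
        |derivWithin (u0 e) (Set.Icc 0 (ℓ e)) x| ≤ K) →
      (∀ e, 2 * Cu / ℓ e ≤ K) →
      ∀ eps : E → ℝ, (∀ e, 0 < eps e ∧ eps e ≤ 1) →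
        ∀ sol : CDSol E V src tgt ℓ a b eps T u0 g,
          ∀ e, ∀ t ∈ Set.Ioo (0 : ℝ) T, |sol.ux e 0 t| ≤ K) :=
  cd_inflow_derivative_bound_general E V src tgt ℓ a b T hℓ ha hb u0 hu0 g Cu hCu
end

section
/- Dissipativity of the convection–diffusion network operator (estimate (2.19) in the proof of Theorem 2.1): Let z = (z^e) with each z^e : [0,ℓ^e] → ℝ twice continuously differentiable, such that z is continuous across vertices (for each vertex v there is ẑ^v with z^e(v) = ẑ^v for all e ∈ E(v)), ẑ^v = 0 at every boundary vertex v ∈ V∂, and ∑_{e∈E(v)} (b^e z^e(v) − ε^e ∂_x z^e(v)) n^e(v) = 0 at every inner vertex v ∈ V₀. Then ∑_{e∈E} ∫₀^{ℓ^e} ( −b^e ∂_x z^e(x) + ε^e ∂_xx z^e(x) ) z^e(x) dx ≤ − ∑_{e∈E} ε^e ∫₀^{ℓ^e} (∂_x z^e(x))² dx ≤ 0. -/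
open Set Finset

/-!
Integrating by parts on each edge gives
`∫ (−bᵉ zᵉₓ + εᵉ zᵉₓₓ) zᵉ = [εᵉ zᵉₓ zᵉ − bᵉ/2 (zᵉ)²]₀^{ℓᵉ} − εᵉ ∫ (zᵉₓ)²`.
Regrouped by vertices, the boundary terms at `v` read
`−ẑᵛ ∑ₑ (bᵉ zᵉ − εᵉ zᵉₓ) nᵉ(v) + (ẑᵛ)²/2 ∑ₑ bᵉ nᵉ(v)`,
which vanishes at boundary vertices because `ẑᵛ = 0` and at inner vertices by the coupling
condition and the conservation of flow rates.
-/

theorem integral_convectionDiffusion_mul_self {f f' f'' : ℝ → ℝ} {a c : ℝ} (hac : a ≤ c)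
    (β ε : ℝ) (hf : ∀ x ∈ Icc a c, HasDerivWithinAt f (f' x) (Icc a c) x)
    (hf' : ∀ x ∈ Icc a c, HasDerivWithinAt f' (f'' x) (Icc a c) x)
    (hf'' : ContinuousOn f'' (Icc a c)) :
    ∫ x in a..c, (-β * f' x + ε * f'' x) * f x =
      (ε * f' c * f c - β / 2 * f c ^ 2) - (ε * f' a * f a - β / 2 * f a ^ 2)
        - ε * ∫ x in a..c, f' x ^ 2 := by
  have hfc : ContinuousOn f (Icc a c) := fun x hx => (hf x hx).continuousWithinAt
  have hf'c : ContinuousOn f' (Icc a c) := fun x hx => (hf' x hx).continuousWithinAt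
  have hmain :
      IntervalIntegrable (fun x => (-β * f' x + ε * f'' x) * f x) MeasureTheory.volume a c :=
    ContinuousOn.intervalIntegrable_of_Icc hac (by fun_prop)
  have hsq : IntervalIntegrable (fun x => ε * f' x ^ 2) MeasureTheory.volume a c :=
    ContinuousOn.intervalIntegrable_of_Icc hac (by fun_prop)
  have ftc : ∫ x in a..c, ((-β * f' x + ε * f'' x) * f x + ε * f' x ^ 2) =
      (ε * f' c * f c - β / 2 * f c ^ 2) - (ε * f' a * f a - β / 2 * f a ^ 2) := by
    refine intervalIntegral.integral_eq_sub_of_hasDeriv_right_of_le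
      (f := fun x => ε * f' x * f x - β / 2 * f x ^ 2) hac (by fun_prop) (fun x hx => ?_)
      (hmain.add hsq)
    have hx' := Ioo_subset_Icc_self hx
    have hderiv := (((hf' x hx').const_mul ε).mul (hf x hx')).sub
      (((hf x hx').pow 2).const_mul (β / 2))
    refine (hderiv.congr_deriv ?_).mono_of_mem_nhdsWithin
      (Icc_mem_nhdsGT_of_mem ⟨hx.1.le, hx.2⟩)
    push_cast
    ring
  rw [intervalIntegral.integral_add hmain hsq, intervalIntegral.integral_const_mul] at ftc
  linarith

section Network

variable {E V : Type} [DecidableEq V] (src tgt : E → V)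

theorem inc_eq_zero_of_not_incident {e : E} {v : V} (h : ¬(src e = v ∨ tgt e = v)) :
    inc src tgt e v = 0 := by
  rw [not_or] at h
  simp [inc, h.1, h.2]

theorem sum_mul_inc_congr [Fintype E] {v : V} {f g : E → ℝ}
    (h : ∀ e, (src e = v ∨ tgt e = v) → f e = g e) :
    ∑ e, f e * inc src tgt e v = ∑ e, g e * inc src tgt e v := by
  refine Finset.sum_congr rfl fun e _ => ?_
  by_cases he : src e = v ∨ tgt e = v
  · rw [h e he]
  · simp [inc_eq_zero_of_not_incident src tgt he]

theorem sub_eq_sum_mul_inc [Fintype V] (ℓ : E → ℝ) {e : E} (hne : src e ≠ tgt e)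
    (g : ℝ → ℝ) :
    g (ℓ e) - g 0 = ∑ v, g (endCoord src ℓ e v) * inc src tgt e v := by
  rw [← Finset.sum_subset (Finset.subset_univ {src e, tgt e}) fun v _ hv => ?_,
    Finset.sum_pair hne]
  · simp [inc, endCoord, hne, hne.symm]
    ring
  · simp only [Finset.mem_insert, Finset.mem_singleton, not_or] at hv
    simp [inc_eq_zero_of_not_incident src tgt (v := v) (by tauto)]

theorem sum_sub_eq_zero_of_sum_mul_inc_eq_zero [Fintype E] [Fintype V] (ℓ : E → ℝ)
    (hne : ∀ e, src e ≠ tgt e) (g : E → ℝ → ℝ)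
    (hbal : ∀ v, ∑ e, g e (endCoord src ℓ e v) * inc src tgt e v = 0) :
    ∑ e, (g e (ℓ e) - g e 0) = 0 := by
  simp_rw [sub_eq_sum_mul_inc src tgt ℓ (hne _)]
  rw [Finset.sum_comm]
  exact Finset.sum_eq_zero fun v _ => hbal v

theorem sum_energyFlux_mul_inc_eq_zero [Fintype E] (b eps zv zxv : E → ℝ) {v : V} {w : ℝ}
    (hdeg : 1 ≤ edgeDeg src tgt v)
    (hcont : ∀ e, (src e = v ∨ tgt e = v) → zv e = w)
    (hbdry : edgeDeg src tgt v = 1 → w = 0)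
    (hflow : 2 ≤ edgeDeg src tgt v → ∑ e, b e * inc src tgt e v = 0)
    (hcoupling : 2 ≤ edgeDeg src tgt v →
      ∑ e, (b e * zv e - eps e * zxv e) * inc src tgt e v = 0) :
    ∑ e, (eps e * zxv e * zv e - b e / 2 * zv e ^ 2) * inc src tgt e v = 0 := by
  have hat_vertex {f : E → ℝ → ℝ} : ∑ e, f e (zv e) * inc src tgt e v =
      ∑ e, f e w * inc src tgt e v :=
    sum_mul_inc_congr src tgt fun e he => by rw [hcont e he]
  rw [hat_vertex (f := fun e u => eps e * zxv e * u - b e / 2 * u ^ 2)]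
  have hsplit : ∑ e, (eps e * zxv e * w - b e / 2 * w ^ 2) * inc src tgt e v =
      -w * ∑ e, (b e * w - eps e * zxv e) * inc src tgt e v
        + w ^ 2 / 2 * ∑ e, b e * inc src tgt e v := by
    rw [Finset.mul_sum, Finset.mul_sum, ← Finset.sum_add_distrib]
    exact Finset.sum_congr rfl fun e _ => by ring
  rw [hsplit]
  rcases Nat.lt_or_ge (edgeDeg src tgt v) 2 with hlt | hge
  · simp [hbdry (by omega)]
  · rw [← hat_vertex (f := fun e u => b e * u - eps e * zxv e), hcoupling hge, hflow hge]
    ring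

end Network

theorem cd_operator_dissipative_general
    (E V : Type) [Fintype E] [Fintype V] [DecidableEq V]
    (src tgt : E → V) (hne : ∀ e, src e ≠ tgt e)
    (ℓ b eps : E → ℝ)
    (hℓ : ∀ e, 0 < ℓ e) (heps : ∀ e, 0 < eps e)
    (hdeg : ∀ v : V, 1 ≤ edgeDeg src tgt v)
    (hflow : ∀ v : V, 2 ≤ edgeDeg src tgt v → ∑ e, b e * inc src tgt e v = 0)
    (z zx zxx : E → ℝ → ℝ)
    (hz : ∀ e, ∀ x ∈ Set.Icc (0 : ℝ) (ℓ e),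
      HasDerivWithinAt (z e) (zx e x) (Set.Icc 0 (ℓ e)) x)
    (hzx : ∀ e, ∀ x ∈ Set.Icc (0 : ℝ) (ℓ e),
      HasDerivWithinAt (zx e) (zxx e x) (Set.Icc 0 (ℓ e)) x)
    (hzxx : ∀ e, ContinuousOn (zxx e) (Set.Icc 0 (ℓ e)))
    (zhat : V → ℝ)
    (hcont : ∀ (v : V) (e : E), (src e = v ∨ tgt e = v) → z e (endCoord src ℓ e v) = zhat v)
    (hbdry : ∀ v : V, edgeDeg src tgt v = 1 → zhat v = 0)
    (hcoupling : ∀ v : V, 2 ≤ edgeDeg src tgt v →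
      ∑ e, (b e * z e (endCoord src ℓ e v) - eps e * zx e (endCoord src ℓ e v))
        * inc src tgt e v = 0) :
    (∑ e, ∫ x in (0 : ℝ)..(ℓ e), (-(b e) * zx e x + eps e * zxx e x) * z e x)
        ≤ -∑ e, eps e * ∫ x in (0 : ℝ)..(ℓ e), (zx e x) ^ 2 ∧
      (-∑ e, eps e * ∫ x in (0 : ℝ)..(ℓ e), (zx e x) ^ 2) ≤ 0 := by
  have hedge e := integral_convectionDiffusion_mul_self (hℓ e).le (b e) (eps e)
    (hz e) (hzx e) (hzxx e)
  have hflux := sum_sub_eq_zero_of_sum_mul_inc_eq_zero src tgt ℓ hne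
    (fun e x => eps e * zx e x * z e x - b e / 2 * z e x ^ 2) fun v =>
      sum_energyFlux_mul_inc_eq_zero src tgt b eps _ _ (hdeg v) (hcont v) (hbdry v) (hflow v)
        (hcoupling v)
  have hdiss : 0 ≤ ∑ e, eps e * ∫ x in (0 : ℝ)..(ℓ e), (zx e x) ^ 2 :=
    Finset.sum_nonneg fun e _ => mul_nonneg (heps e).le
      (intervalIntegral.integral_nonneg (hℓ e).le fun x _ => sq_nonneg _)
  refine ⟨le_of_eq ?_, neg_nonpos.mpr hdiss⟩
  rw [Finset.sum_congr rfl fun e _ => hedge e, Finset.sum_sub_distrib, hflux, zero_sub]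

/-- **Dissipativity of the convection–diffusion network operator** (estimate (2.19) in
the proof of Theorem 2.1).  For `z` twice continuously differentiable on each edge,
continuous across vertices, vanishing at boundary vertices and satisfying the coupling
condition at inner vertices,
`∑ₑ ∫₀^{ℓᵉ} (−bᵉ ∂ₓzᵉ + εᵉ ∂ₓₓzᵉ) zᵉ dx ≤ −∑ₑ εᵉ ∫₀^{ℓᵉ} (∂ₓzᵉ)² dx ≤ 0`. -/
theorem cd_operator_dissipative
    (E V : Type) [Fintype E] [Fintype V] [DecidableEq E] [DecidableEq V]
    (src tgt : E → V) (hne : ∀ e, src e ≠ tgt e)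
    (ℓ b eps : E → ℝ)
    (hℓ : ∀ e, 0 < ℓ e) (hb : ∀ e, 0 < b e) (heps : ∀ e, 0 < eps e)
    (hdeg : ∀ v : V, 1 ≤ edgeDeg src tgt v)
    (hflow : ∀ v : V, 2 ≤ edgeDeg src tgt v → ∑ e, b e * inc src tgt e v = 0)
    (z zx zxx : E → ℝ → ℝ)
    (hz : ∀ e, ∀ x ∈ Set.Icc (0 : ℝ) (ℓ e),
      HasDerivWithinAt (z e) (zx e x) (Set.Icc 0 (ℓ e)) x)
    (hzx : ∀ e, ∀ x ∈ Set.Icc (0 : ℝ) (ℓ e),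
      HasDerivWithinAt (zx e) (zxx e x) (Set.Icc 0 (ℓ e)) x)
    (hzxx : ∀ e, ContinuousOn (zxx e) (Set.Icc 0 (ℓ e)))
    (zhat : V → ℝ)
    (hcont : ∀ (v : V) (e : E), (src e = v ∨ tgt e = v) → z e (endCoord src ℓ e v) = zhat v)
    (hbdry : ∀ v : V, edgeDeg src tgt v = 1 → zhat v = 0)
    (hcoupling : ∀ v : V, 2 ≤ edgeDeg src tgt v →
      ∑ e, (b e * z e (endCoord src ℓ e v) - eps e * zx e (endCoord src ℓ e v))
        * inc src tgt e v = 0) :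
    (∑ e, ∫ x in (0 : ℝ)..(ℓ e), (-(b e) * zx e x + eps e * zxx e x) * z e x)
        ≤ -∑ e, eps e * ∫ x in (0 : ℝ)..(ℓ e), (zx e x) ^ 2 ∧
      (-∑ e, eps e * ∫ x in (0 : ℝ)..(ℓ e), (zx e x) ^ 2) ≤ 0 :=
  cd_operator_dissipative_general E V src tgt hne ℓ b eps hℓ heps hdeg hflow z zx zxx hz hzx hzxx
    zhat hcont hbdry hcoupling
end

section
/- Dissipativity of the transport network operator (Step 2 of the proof of Theorem 2.2): Let z = (z^e) with each z^e : [0,ℓ^e] → ℝ continuously differentiable, and suppose there are nodal values ẑ^v for each vertex v ∉ V∂^out such that z^e(0) = ẑ^v for every edge e starting at v, that ∑_{e∈E^in(v)} b^e z^e(v) = (∑_{e∈E^out(v)} b^e) ẑ^v at every inner vertex v ∈ V₀, and that ẑ^v = 0 at every inflow boundary vertex v ∈ V∂^in. Then − ∑_{e∈E} ∫₀^{ℓ^e} b^e (∂_x z^e(x)) z^e(x) dx ≤ − (1/2) ∑_{v∈V∂^out} b^{e(v)} (z^{e(v)}(v))² ≤ 0, where e(v) is the unique edge incident to the outflow boundary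 vertex v. -/
/-!
Integrating `b (z²/2)'` along each edge turns the left-hand side into `½ ∑ₑ bᵉ (zᵉ(0)² − zᵉ(ℓᵉ)²)`.
Regrouping these endpoint terms by vertex, it suffices to show that at every vertex the outgoing
mass `(∑_{E^out(v)} bᵉ) (ẑᵛ)²` plus, at an outflow boundary vertex, its own outflow term is at most
the incoming mass `∑_{E^in(v)} bᵉ zᵉ(v)²`. At an inner vertex the coupling condition says that `ẑᵛ`
is the `b`-weighted mean of the incoming values, so this is the nonnegativity of their weighted
variance; at boundary vertices it is immediate.
-/

open Set Finset

open scoped Interval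

theorem intervalIntegral.integral_deriv_mul_self {f f' : ℝ → ℝ} {a b : ℝ}
    (hf : ∀ x ∈ [[a, b]], HasDerivWithinAt f (f' x) [[a, b]] x)
    (hf' : IntervalIntegrable f' MeasureTheory.volume a b) :
    ∫ x in a..b, f' x * f x = (f b ^ 2 - f a ^ 2) / 2 := by
  have h := integral_deriv_mul_eq_sub_of_hasDerivWithinAt hf hf hf' hf'
  simp only [mul_comm (f _) (f' _), ← two_mul, intervalIntegral.integral_const_mul] at h
  linarith

theorem Finset.mul_sq_le_sum_mul_sq_of_sum_mul_eq {ι : Type*} (s : Finset ι) {w y : ι → ℝ}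
    {c : ℝ} (hw : ∀ i ∈ s, 0 ≤ w i) (hc : ∑ i ∈ s, w i * y i = (∑ i ∈ s, w i) * c) :
    (∑ i ∈ s, w i) * c ^ 2 ≤ ∑ i ∈ s, w i * y i ^ 2 := by
  have hvar : 0 ≤ ∑ i ∈ s, w i * (y i - c) ^ 2 :=
    sum_nonneg fun i hi => mul_nonneg (hw i hi) (sq_nonneg _)
  have hexpand : ∑ i ∈ s, w i * (y i - c) ^ 2
      = ∑ i ∈ s, w i * y i ^ 2 - 2 * c * ∑ i ∈ s, w i * y i + (∑ i ∈ s, w i) * c ^ 2 := by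
    simp only [mul_sum, sum_mul, ← sum_sub_distrib, ← sum_add_distrib]
    exact sum_congr rfl fun i _ => by ring
  rw [hexpand, hc] at hvar
  linarith

section Network

variable {E V : Type} [Fintype E] [DecidableEq V] {src tgt : E → V} {v : V}

theorem eq_of_incident_of_edgeDeg_le_one (h : edgeDeg src tgt v ≤ 1) {e e' : E}
    (he : src e = v ∨ tgt e = v) (he' : src e' = v ∨ tgt e' = v) : e = e' :=
  Finset.card_le_one.mp h e (by simpa using he) e' (by simpa using he')

theorem not_incident_of_edgeDeg_eq_zero (h : edgeDeg src tgt v = 0) (e : E) :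
    src e ≠ v ∧ tgt e ≠ v :=
  not_or.mp (filter_eq_empty_iff.mp (card_eq_zero.mp h) (mem_univ e))

theorem filter_tgt_eq_singleton_of_edgeDeg_eq_one (h : edgeDeg src tgt v = 1) {e : E}
    (he : tgt e = v) : univ.filter (fun e' => tgt e' = v) = {e} :=
  eq_singleton_iff_unique_mem.mpr ⟨by simpa using he, fun e' he' =>
    eq_of_incident_of_edgeDeg_le_one h.le (Or.inr (by simpa using he')) (Or.inr he)⟩

theorem filter_src_eq_empty_of_edgeDeg_eq_one (hne : ∀ e, src e ≠ tgt e)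
    (h : edgeDeg src tgt v = 1) {e : E} (he : tgt e = v) :
    univ.filter (fun e' => src e' = v) = ∅ :=
  filter_eq_empty_iff.mpr fun e' _ he' => by
    obtain rfl := eq_of_incident_of_edgeDeg_le_one h.le (Or.inl he') (Or.inr he)
    exact hne e' (he'.trans he.symm)

theorem sum_src_mul_sq_add_ite_le_sum_tgt_mul_sq (hne : ∀ e, src e ≠ tgt e) {b y : E → ℝ}
    {c : ℝ} {e₀ : E} (hb : ∀ e, 0 ≤ b e)
    (hflow : 2 ≤ edgeDeg src tgt v →
      ∑ e ∈ univ.filter (fun e => tgt e = v), b e = ∑ e ∈ univ.filter (fun e => src e = v), b e)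
    (hcoupling : 2 ≤ edgeDeg src tgt v →
      ∑ e ∈ univ.filter (fun e => tgt e = v), b e * y e
        = (∑ e ∈ univ.filter (fun e => src e = v), b e) * c)
    (hbdry_in : edgeDeg src tgt v = 1 → (∃ e, src e = v) → c = 0)
    (he₀ : edgeDeg src tgt v = 1 → src e₀ = v ∨ tgt e₀ = v) :
    (∑ e ∈ univ.filter (fun e => src e = v), b e) * c ^ 2
        + (if edgeDeg src tgt v = 1 ∧ tgt e₀ = v then b e₀ * y e₀ ^ 2 else 0)
      ≤ ∑ e ∈ univ.filter (fun e => tgt e = v), b e * y e ^ 2 := by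
  by_cases h1 : edgeDeg src tgt v = 1
  · rcases he₀ h1 with hsrc | htgt
    · rw [hbdry_in h1 ⟨e₀, hsrc⟩, if_neg fun h => hne e₀ (hsrc.trans h.2.symm)]
      simpa using sum_nonneg fun e _ => mul_nonneg (hb e) (sq_nonneg (y e))
    · rw [filter_src_eq_empty_of_edgeDeg_eq_one hne h1 htgt,
        filter_tgt_eq_singleton_of_edgeDeg_eq_one h1 htgt, if_pos ⟨h1, htgt⟩]
      simp
  rw [if_neg fun h => h1 h.1, add_zero]
  obtain ⟨hflow, hcoupling⟩ :
      ∑ e ∈ univ.filter (fun e => tgt e = v), b e = ∑ e ∈ univ.filter (fun e => src e = v), b e ∧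
      ∑ e ∈ univ.filter (fun e => tgt e = v), b e * y e
        = (∑ e ∈ univ.filter (fun e => src e = v), b e) * c := by
    rcases Nat.lt_or_ge (edgeDeg src tgt v) 1 with h0 | h2
    · have hisolated := not_incident_of_edgeDeg_eq_zero (Nat.lt_one_iff.mp h0)
      simp [filter_false_of_mem fun e _ => (hisolated e).1,
        filter_false_of_mem fun e _ => (hisolated e).2]
    · exact ⟨hflow (by omega), hcoupling (by omega)⟩
  rw [← hflow] at hcoupling ⊢
  exact mul_sq_le_sum_mul_sq_of_sum_mul_eq _ (fun e _ => hb e) hcoupling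

end Network

theorem transport_operator_dissipative_general
    (E V : Type) [Fintype E] [Fintype V] [DecidableEq V]
    (src tgt : E → V) (hne : ∀ e, src e ≠ tgt e)
    (ℓ b : E → ℝ) (hℓ : ∀ e, 0 < ℓ e) (hb : ∀ e, 0 < b e)
    (hflow : ∀ v : V, 2 ≤ edgeDeg src tgt v →
      ∑ e ∈ Finset.univ.filter (fun e => tgt e = v), b e
        = ∑ e ∈ Finset.univ.filter (fun e => src e = v), b e)
    (z zx : E → ℝ → ℝ)
    (hz : ∀ e, ∀ x ∈ Set.Icc (0 : ℝ) (ℓ e),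
      HasDerivWithinAt (z e) (zx e x) (Set.Icc 0 (ℓ e)) x)
    (hzx : ∀ e, ContinuousOn (zx e) (Set.Icc 0 (ℓ e)))
    (zhat : V → ℝ)
    (hin : ∀ e, z e 0 = zhat (src e))
    (hcoupling : ∀ v : V, 2 ≤ edgeDeg src tgt v →
      ∑ e ∈ Finset.univ.filter (fun e => tgt e = v), b e * z e (ℓ e)
        = (∑ e ∈ Finset.univ.filter (fun e => src e = v), b e) * zhat v)
    (hbdry_in : ∀ v : V, edgeDeg src tgt v = 1 → (∃ e, src e = v) → zhat v = 0)
    (eOf : V → E)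
    (heOf : ∀ v : V, edgeDeg src tgt v = 1 → (src (eOf v) = v ∨ tgt (eOf v) = v)) :
    (-∑ e, ∫ x in (0 : ℝ)..(ℓ e), b e * zx e x * z e x)
        ≤ -(1 / 2 : ℝ) * ∑ v ∈ Finset.univ.filter
            (fun v : V => edgeDeg src tgt v = 1 ∧ tgt (eOf v) = v),
            b (eOf v) * (z (eOf v) (ℓ (eOf v))) ^ 2 ∧
      (-(1 / 2 : ℝ) * ∑ v ∈ Finset.univ.filter
          (fun v : V => edgeDeg src tgt v = 1 ∧ tgt (eOf v) = v),
          b (eOf v) * (z (eOf v) (ℓ (eOf v))) ^ 2) ≤ 0 := by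
  have hb₀ : ∀ e, 0 ≤ b e := fun e => (hb e).le
  have hedge : ∀ e, ∫ x in (0 : ℝ)..(ℓ e), b e * zx e x * z e x
      = (b e * z e (ℓ e) ^ 2 - b e * z e 0 ^ 2) / 2 := by
    intro e
    have hze := hz e
    have hzxe := hzx e
    rw [← uIcc_of_le (hℓ e).le] at hze hzxe
    simp only [mul_assoc, intervalIntegral.integral_const_mul,
      intervalIntegral.integral_deriv_mul_self hze hzxe.intervalIntegrable]
    ring
  have hvertex : ∑ e, b e * z e 0 ^ 2 + ∑ v ∈ univ.filter
      (fun v : V => edgeDeg src tgt v = 1 ∧ tgt (eOf v) = v), b (eOf v) * z (eOf v) (ℓ (eOf v)) ^ 2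
      ≤ ∑ e, b e * z e (ℓ e) ^ 2 := by
    rw [← sum_fiberwise univ src, ← sum_fiberwise univ tgt, sum_filter, ← sum_add_distrib]
    refine sum_le_sum fun v _ => ?_
    have hout : ∑ e ∈ univ.filter (fun e => src e = v), b e * z e 0 ^ 2
        = (∑ e ∈ univ.filter (fun e => src e = v), b e) * zhat v ^ 2 := by
      rw [sum_mul]
      exact sum_congr rfl fun e he => by rw [hin, (mem_filter.mp he).2]
    rw [hout]
    exact sum_src_mul_sq_add_ite_le_sum_tgt_mul_sq hne hb₀ (hflow v) (hcoupling v) (hbdry_in v)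
      (heOf v)
  have hboundary := sum_nonneg fun v (_ : v ∈ univ.filter
      (fun v : V => edgeDeg src tgt v = 1 ∧ tgt (eOf v) = v)) =>
    mul_nonneg (hb₀ (eOf v)) (sq_nonneg (z (eOf v) (ℓ (eOf v))))
  simp only [hedge, ← sum_div, sum_sub_distrib]
  constructor <;> linarith

/-- **Dissipativity of the transport network operator** (Step 2 of the proof of
Theorem 2.2).  For `z` continuously differentiable on each edge, with nodal values
`ẑ` at the inflow endpoints, transport coupling at the inner vertices and `ẑ = 0` at
inflow boundary vertices,
`−∑ₑ ∫₀^{ℓᵉ} bᵉ (∂ₓzᵉ) zᵉ dx ≤ −(1/2) ∑_{v ∈ V∂ᵒᵘᵗ} bᵉ (zᵉ(v))² ≤ 0`. -/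
theorem transport_operator_dissipative
    (E V : Type) [Fintype E] [Fintype V] [DecidableEq E] [DecidableEq V]
    (src tgt : E → V) (hne : ∀ e, src e ≠ tgt e)
    (ℓ b : E → ℝ) (hℓ : ∀ e, 0 < ℓ e) (hb : ∀ e, 0 < b e)
    (hdeg : ∀ v : V, 1 ≤ edgeDeg src tgt v)
    (hinout : ∀ v : V, 2 ≤ edgeDeg src tgt v → (∃ e, tgt e = v) ∧ (∃ e, src e = v))
    (hflow : ∀ v : V, 2 ≤ edgeDeg src tgt v →
      ∑ e ∈ Finset.univ.filter (fun e => tgt e = v), b e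
        = ∑ e ∈ Finset.univ.filter (fun e => src e = v), b e)
    (z zx : E → ℝ → ℝ)
    (hz : ∀ e, ∀ x ∈ Set.Icc (0 : ℝ) (ℓ e),
      HasDerivWithinAt (z e) (zx e x) (Set.Icc 0 (ℓ e)) x)
    (hzx : ∀ e, ContinuousOn (zx e) (Set.Icc 0 (ℓ e)))
    (zhat : V → ℝ)
    (hin : ∀ e, z e 0 = zhat (src e))
    (hcoupling : ∀ v : V, 2 ≤ edgeDeg src tgt v →
      ∑ e ∈ Finset.univ.filter (fun e => tgt e = v), b e * z e (ℓ e)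
        = (∑ e ∈ Finset.univ.filter (fun e => src e = v), b e) * zhat v)
    (hbdry_in : ∀ v : V, edgeDeg src tgt v = 1 → (∃ e, src e = v) → zhat v = 0)
    (eOf : V → E)
    (heOf : ∀ v : V, edgeDeg src tgt v = 1 → (src (eOf v) = v ∨ tgt (eOf v) = v)) :
    (-∑ e, ∫ x in (0 : ℝ)..(ℓ e), b e * zx e x * z e x)
        ≤ -(1 / 2 : ℝ) * ∑ v ∈ Finset.univ.filter
            (fun v : V => edgeDeg src tgt v = 1 ∧ tgt (eOf v) = v),
            b (eOf v) * (z (eOf v) (ℓ (eOf v))) ^ 2 ∧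
      (-(1 / 2 : ℝ) * ∑ v ∈ Finset.univ.filter
          (fun v : V => edgeDeg src tgt v = 1 ∧ tgt (eOf v) = v),
          b (eOf v) * (z (eOf v) (ℓ (eOf v))) ^ 2) ≤ 0 :=
  transport_operator_dissipative_general E V src tgt hne ℓ b hℓ hb hflow z zx hz hzx zhat hin
    hcoupling hbdry_in eOf heOf
end
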